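/- arXiv:1810.04557 — 6 statements merged into one kernel-verified Lean document; each statement's English description precedes it below -/
import Mathlib

section
/- Let $m$ be a real number with $0 < m < 1$ and let $a, u$ be real numbers with $0 \le u < a$. Then $\tfrac{m}{2}(a-u)(a^m - u^m) \le \int_u^a (a^m - y^m)\,dy \le (a-u)(a^m - u^m)$. -/
open MeasureTheory intervalIntegral

lemma tangent_line_bound {m a y : ℝ} (hm0 : 0 < m) (hm1 : m < 1)
    (ha : 0 < a) (hy : 0 ≤ y) (hya : y ≤ a) :
    m * a ^ (m - 1) * (a - y) ≤ a ^ m - y ^ m := by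
  set s : ℝ := y / a - 1 with hs
  have hs1 : -1 ≤ s := by
    have : 0 ≤ y / a := div_nonneg hy ha.le
    simp [hs]; linarith
  have key : (1 + s) ^ m ≤ 1 + m * s :=
    rpow_one_add_le_one_add_mul_self (by linarith) hm0.le hm1.le
  have h1s : (1 : ℝ) + s = y / a := by simp [hs]
  have hym : y ^ m = a ^ m * (1 + s) ^ m := by
    rw [h1s, Real.div_rpow hy ha.le, mul_div_cancel₀]
    exact (Real.rpow_pos_of_pos ha m).ne'
  have ham1 : a ^ (m - 1) = a ^ m / a := by
    rw [Real.rpow_sub ha, Real.rpow_one]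
  have hb : y ^ m ≤ a ^ m + m * a ^ m * s := by
    rw [hym]
    have := mul_le_mul_of_nonneg_left key (Real.rpow_pos_of_pos ha m).le
    nlinarith
  have hsa : a ^ m * s = a ^ (m - 1) * (y - a) := by
    rw [ham1, hs]; field_simp
  nlinarith [hb, hsa]

/-- For `0 < m < 1` and `0 ≤ u < a`, the integral `∫_u^a (a^m - y^m) dy` is bounded
below by `(m/2)(a-u)(a^m - u^m)` and above by `(a-u)(a^m - u^m)`. -/
theorem stmt_1 (m a u : ℝ) (hm0 : 0 < m) (hm1 : m < 1)
    (hu : 0 ≤ u) (hua : u < a) :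
    (m / 2) * (a - u) * (a ^ m - u ^ m) ≤ (∫ y in u..a, (a ^ m - y ^ m)) ∧
      (∫ y in u..a, (a ^ m - y ^ m)) ≤ (a - u) * (a ^ m - u ^ m) := by
  have ha : 0 < a := lt_of_le_of_lt hu hua
  have hint : IntervalIntegrable (fun y : ℝ => a ^ m - y ^ m) volume u a := by
    apply IntervalIntegrable.sub intervalIntegrable_const
    exact intervalIntegral.intervalIntegrable_rpow' (by linarith)
  constructor
  · -- lower bound
    have hpt : ∀ y ∈ Set.Icc u a, m * a ^ (m - 1) * (a - y) ≤ a ^ m - y ^ m := by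
      intro y hy
      exact tangent_line_bound hm0 hm1 ha (le_trans hu hy.1) hy.2
    have hint2 : IntervalIntegrable (fun y : ℝ => m * a ^ (m - 1) * (a - y)) volume u a := by
      apply Continuous.intervalIntegrable; continuity
    have hmono := intervalIntegral.integral_mono_on hua.le hint2 hint hpt
    have hcomp : (∫ y in u..a, m * a ^ (m - 1) * (a - y)) =
        m * a ^ (m - 1) * ((a - u) ^ 2 / 2) := by
      rw [intervalIntegral.integral_const_mul]
      have : (∫ y in u..a, (a - y)) = (a - u) ^ 2 / 2 := by
        have : (∫ y in u..a, (a - y)) = (∫ y in u..a, a) - ∫ y in u..a, y := by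
          apply intervalIntegral.integral_sub intervalIntegrable_const
          exact intervalIntegral.intervalIntegrable_id
        rw [this, intervalIntegral.integral_const, integral_id]
        simp [smul_eq_mul]; ring
      rw [this]
    -- a^m - u^m ≤ a^(m-1) * (a - u)
    have hkey : a ^ m - u ^ m ≤ a ^ (m - 1) * (a - u) := by
      have h1 : u * a ^ (m - 1) ≤ u ^ m := by
        rcases eq_or_lt_of_le hu with h | h
        · simp [← h, Real.zero_rpow hm0.ne', mul_nonneg]
        · have : a ^ (m - 1) ≤ u ^ (m - 1) :=
            Real.rpow_le_rpow_of_nonpos h hua.le (by linarith)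
          calc u * a ^ (m - 1) ≤ u * u ^ (m - 1) :=
                mul_le_mul_of_nonneg_left this hu
            _ = u ^ m := by
                rw [← Real.rpow_one_add' h.le (by linarith)]
                ring_nf
      have h2 : a ^ (m - 1) * a = a ^ m := by
        rw [← Real.rpow_add_one ha.ne' (m - 1)]; ring_nf
      nlinarith
    have hapos : 0 < a ^ (m - 1) := Real.rpow_pos_of_pos ha _
    calc (m / 2) * (a - u) * (a ^ m - u ^ m)
        ≤ (m / 2) * (a - u) * (a ^ (m - 1) * (a - u)) := by
          apply mul_le_mul_of_nonneg_left hkey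
          have : (0:ℝ) < a - u := by linarith
          positivity
      _ = m * a ^ (m - 1) * ((a - u) ^ 2 / 2) := by ring
      _ ≤ _ := by rw [← hcomp]; exact hmono
  · -- upper bound
    have hpt : ∀ y ∈ Set.Icc u a, a ^ m - y ^ m ≤ a ^ m - u ^ m := by
      intro y hy
      have : u ^ m ≤ y ^ m := Real.rpow_le_rpow hu hy.1 hm0.le
      linarith
    have hmono := intervalIntegral.integral_mono_on hua.le hint
      intervalIntegrable_const hpt
    rwa [intervalIntegral.integral_const, smul_eq_mul] at hmono
end

section
/- Let $q > 1/2$ be a real number. There exist constants $c_0, c_1 > 0$ depending only on $q$ such that for every Lebesgue-measurable set $E \subseteq \mathbb{R}^n$ with $0 < |E| < \infty$ and every nonnegative measurable function $g$ on $E$ with $g^{2q} \in L^1(E)$, one has $\fint_E \big|g^q - \big((g)_E\big)^q\big|^2 \,dx \;\le\; c_0 \fint_E \big|g^q - (g^q)_E\big|^2 \,dx \;\le\; c_1 \fint_E \big|g^q - \big((g)_E\big)^q\big|^2 \,dx$. -/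
open MeasureTheory

/-! Write `u = g ^ q`, `a = ∫ u`, `k = (∫ g) ^ q` and `V = ∫ (u - a) ^ 2` over a probability
measure. The second inequality is `V ≤ ∫ (u - c) ^ 2` for every constant `c`. For the first,
since `∫ (u - k) ^ 2 = V + (a - k) ^ 2`, everything reduces to
`|a - k| ≤ max 1 q * √V`. From above, Jensen for `t ↦ t ^ (2q)` gives `k ^ 2 ≤ ∫ u ^ 2 = a ^ 2 + V`.
From below, for `q ≤ 1` Jensen for the concave `t ↦ t ^ q` gives `a ≤ k`; for `q ≥ 1` we integrate
the second-order bound `x ^ s ≥ 1 + s (x - 1) - (x - 1) ^ 2` (with `s = 1/q`, `x = u / a`) to get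
`∫ g ≥ a ^ s (1 - V / a ^ 2)`, and Bernoulli's inequality turns this into `k ≥ a - q V / a`. -/

lemma Real.rpow_le_one_add_rpow {x p r : ℝ} (hx : 0 ≤ x) (hp : 0 ≤ p) (hpr : p ≤ r) :
    x ^ p ≤ 1 + x ^ r := by
  rcases le_total x 1 with h | h
  · linarith [Real.rpow_le_one hx h hp, Real.rpow_nonneg hx r]
  · linarith [Real.rpow_le_rpow_of_exponent_le h hpr]

lemma Real.one_add_mul_sub_sub_sq_le_rpow {s x : ℝ} (hs0 : 0 ≤ s) (hs1 : s ≤ 1) (hx : 0 ≤ x) :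
    1 + s * (x - 1) - (x - 1) ^ 2 ≤ x ^ s := by
  rcases le_or_gt (1 + s * (x - 1) - (x - 1) ^ 2) 0 with hP | hP
  · exact hP.trans (Real.rpow_nonneg hx s)
  · -- `x ^ s = x / x ^ (1 - s) ≥ x / ((1 - s) * x + s)` by weighted AM-GM, leaving a polynomial
    -- inequality.
    have hD : 0 < (1 - s) * x + s := by
      nlinarith [mul_nonneg (sub_nonneg.2 hs1) hx, mul_nonneg hs0 hx]
    have hamgm : x ^ (1 - s) ≤ (1 - s) * x + s := by
      simpa using Real.geom_mean_le_arith_mean2_weighted (by linarith) hs0 hx zero_le_one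
        (by ring)
    have hsplit : x = x ^ s * x ^ (1 - s) := by
      rw [← Real.rpow_add' hx (by norm_num), add_sub_cancel, Real.rpow_one]
    refine le_of_mul_le_mul_right ?_ hD
    calc (1 + s * (x - 1) - (x - 1) ^ 2) * ((1 - s) * x + s) ≤ x := by
          nlinarith [mul_nonneg (sq_nonneg (x - 1)) (mul_nonneg (sub_nonneg.2 hs1) hx),
            sq_nonneg (s * (x - 1))]
      _ ≤ x ^ s * ((1 - s) * x + s) := by
          nth_rewrite 1 [hsplit]; gcongr

lemma Real.rpow_two_mul {x : ℝ} (hx : 0 ≤ x) (y : ℝ) : x ^ (2 * y) = (x ^ y) ^ 2 := by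
  rw [mul_comm, Real.rpow_mul hx, Real.rpow_two]

variable {α : Type*} [MeasurableSpace α] {μ : Measure α}

lemma integrable_rpow_of_le [IsFiniteMeasure μ] {g : α → ℝ} (hg : Measurable g)
    (hg0 : ∀ x, 0 ≤ g x) {p r : ℝ} (hp : 0 ≤ p) (hpr : p ≤ r)
    (hint : Integrable (fun x => g x ^ r) μ) : Integrable (fun x => g x ^ p) μ :=
  ((integrable_const 1).add hint).mono' (hg.pow_const p).aestronglyMeasurable
    (ae_of_all _ fun x => by
      rw [Real.norm_of_nonneg (Real.rpow_nonneg (hg0 x) p)]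
      exact Real.rpow_le_one_add_rpow (hg0 x) hp hpr)

lemma integrable_sub_sq [IsFiniteMeasure μ] {u : α → ℝ} (hu : Integrable u μ)
    (hu2 : Integrable (fun x => u x ^ 2) μ) (c : ℝ) : Integrable (fun x => (u x - c) ^ 2) μ := by
  have hexpand : ∀ x, (u x - c) ^ 2 = u x ^ 2 - 2 * c * u x + c ^ 2 := fun x => by ring
  simp_rw [hexpand]
  exact (hu2.sub (hu.const_mul _)).add (integrable_const _)

section Probability

variable [IsProbabilityMeasure μ]

lemma integral_sub_sq {u : α → ℝ} (hu : Integrable u μ)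
    (hu2 : Integrable (fun x => u x ^ 2) μ) (c : ℝ) :
    ∫ x, (u x - c) ^ 2 ∂μ = ∫ x, u x ^ 2 ∂μ - 2 * c * ∫ x, u x ∂μ + c ^ 2 := by
  have hexpand : ∀ x, (u x - c) ^ 2 = u x ^ 2 - 2 * c * u x + c ^ 2 := fun x => by ring
  simp_rw [hexpand]
  rw [integral_add (f := fun x => u x ^ 2 - 2 * c * u x) (hu2.sub (hu.const_mul _))
    (integrable_const _), integral_sub hu2 (hu.const_mul _), integral_const_mul, integral_const]
  simp

lemma integral_sub_sq_eq_integral_sub_integral_sq_add {u : α → ℝ} (hu : Integrable u μ)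
    (hu2 : Integrable (fun x => u x ^ 2) μ) (c : ℝ) :
    ∫ x, (u x - c) ^ 2 ∂μ = ∫ x, (u x - ∫ y, u y ∂μ) ^ 2 ∂μ + (∫ x, u x ∂μ - c) ^ 2 := by
  rw [integral_sub_sq hu hu2, integral_sub_sq hu hu2]
  ring

lemma integral_rpow_le_rpow_integral {g : α → ℝ} (hg0 : ∀ x, 0 ≤ g x) {p : ℝ} (hp0 : 0 ≤ p)
    (hp1 : p ≤ 1) (hg : Integrable g μ) (hgp : Integrable (fun x => g x ^ p) μ) :
    ∫ x, g x ^ p ∂μ ≤ (∫ x, g x ∂μ) ^ p :=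
  (Real.concaveOn_rpow hp0 hp1).le_map_integral (Real.continuous_rpow_const hp0).continuousOn
    isClosed_Ici (ae_of_all _ hg0) hg hgp

lemma rpow_integral_le_integral_rpow {g : α → ℝ} (hg0 : ∀ x, 0 ≤ g x) {p : ℝ} (hp : 1 ≤ p)
    (hg : Integrable g μ) (hgp : Integrable (fun x => g x ^ p) μ) :
    (∫ x, g x ∂μ) ^ p ≤ ∫ x, g x ^ p ∂μ :=
  (convexOn_rpow hp).map_integral_le (Real.continuous_rpow_const (by linarith)).continuousOn
    isClosed_Ici (ae_of_all _ hg0) hg hgp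

lemma integral_sub_integral_sq_le_integral_sub_sq {u : α → ℝ} (hu : Integrable u μ)
    (hu2 : Integrable (fun x => u x ^ 2) μ) (c : ℝ) :
    ∫ x, (u x - ∫ y, u y ∂μ) ^ 2 ∂μ ≤ ∫ x, (u x - c) ^ 2 ∂μ := by
  rw [integral_sub_sq_eq_integral_sub_integral_sq_add hu hu2 c]
  exact le_add_of_nonneg_right (sq_nonneg _)

lemma integral_centered_quadratic {u : α → ℝ} (hu : Integrable u μ)
    (hu2 : Integrable (fun x => u x ^ 2) μ) (a b c : ℝ) :
    ∫ x, (a + b * (u x - ∫ y, u y ∂μ) + c * (u x - ∫ y, u y ∂μ) ^ 2) ∂μ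
      = a + c * ∫ x, (u x - ∫ y, u y ∂μ) ^ 2 ∂μ := by
  have hlin : Integrable (fun x => b * (u x - ∫ y, u y ∂μ)) μ :=
    (hu.sub (integrable_const _)).const_mul b
  rw [integral_add (f := fun x => a + b * (u x - ∫ y, u y ∂μ)) ((integrable_const a).add hlin)
    ((integrable_sub_sq hu hu2 _).const_mul c),
    integral_add (integrable_const a) hlin, integral_const_mul, integral_const_mul,
    integral_sub hu (integrable_const _)]
  simp

lemma rpow_integral_le_integral_rpow_add_sqrt {g : α → ℝ} (hg0 : ∀ x, 0 ≤ g x) {q : ℝ}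
    (hq : 1 / 2 ≤ q) (hg : Integrable g μ) (hgq : Integrable (fun x => g x ^ q) μ)
    (hgq2 : Integrable (fun x => (g x ^ q) ^ 2) μ) :
    (∫ x, g x ∂μ) ^ q
      ≤ ∫ x, g x ^ q ∂μ + √(∫ x, (g x ^ q - ∫ y, g y ^ q ∂μ) ^ 2 ∂μ) := by
  set a := ∫ x, g x ^ q ∂μ
  set V := ∫ x, (g x ^ q - a) ^ 2 ∂μ
  have ha : 0 ≤ a := integral_nonneg fun x => Real.rpow_nonneg (hg0 x) q
  have hV : 0 ≤ V := integral_nonneg fun x => sq_nonneg _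
  have hjensen : ((∫ x, g x ∂μ) ^ q) ^ 2 ≤ a ^ 2 + V :=
    calc ((∫ x, g x ∂μ) ^ q) ^ 2 = (∫ x, g x ∂μ) ^ (2 * q) :=
          (Real.rpow_two_mul (integral_nonneg hg0) q).symm
      _ ≤ ∫ x, g x ^ (2 * q) ∂μ :=
          rpow_integral_le_integral_rpow hg0 (by linarith) hg
            (by simpa only [Real.rpow_two_mul (hg0 _)] using hgq2)
      _ = ∫ x, (g x ^ q - 0) ^ 2 ∂μ := by simp only [Real.rpow_two_mul (hg0 _), sub_zero]
      _ = a ^ 2 + V := by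
          rw [integral_sub_sq_eq_integral_sub_integral_sq_add hgq hgq2, sub_zero, add_comm]
  nlinarith [Real.sq_sqrt hV, Real.sqrt_nonneg V]

lemma integral_rpow_sub_rpow_integral_le {g : α → ℝ} (hg0 : ∀ x, 0 ≤ g x) {q : ℝ}
    (hq : 1 ≤ q) (hg : Integrable g μ) (hgq : Integrable (fun x => g x ^ q) μ)
    (hgq2 : Integrable (fun x => (g x ^ q) ^ 2) μ) :
    ∫ x, g x ^ q ∂μ - (∫ x, g x ∂μ) ^ q
      ≤ q * √(∫ x, (g x ^ q - ∫ y, g y ^ q ∂μ) ^ 2 ∂μ) := by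
  set a := ∫ x, g x ^ q ∂μ
  set V := ∫ x, (g x ^ q - a) ^ 2 ∂μ
  have ha : 0 ≤ a := integral_nonneg fun x => Real.rpow_nonneg (hg0 x) q
  have hV : 0 ≤ V := integral_nonneg fun x => sq_nonneg _
  have hk : 0 ≤ (∫ x, g x ∂μ) ^ q := Real.rpow_nonneg (integral_nonneg hg0) q
  have hq0 : 0 < q := by linarith
  rcases le_or_gt (a ^ 2) V with hlarge | hsmall
  · have : a ≤ √V := (Real.le_sqrt ha hV).2 hlarge
    nlinarith [Real.sqrt_nonneg V]
  have ha0 : 0 < a := by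
    by_contra! h
    nlinarith
  set s := q⁻¹
  have hs : 0 < s := inv_pos.2 hq0
  have has : 0 < a ^ s := Real.rpow_pos_of_pos ha0 s
  have hpointwise : ∀ x,
      a ^ s + (s * a ^ s / a) * (g x ^ q - a) + (-(a ^ s / a ^ 2)) * (g x ^ q - a) ^ 2 ≤ g x := by
    intro x
    have h := Real.one_add_mul_sub_sub_sq_le_rpow hs.le (inv_le_one_of_one_le₀ hq)
      (div_nonneg (Real.rpow_nonneg (hg0 x) q) ha)
    rw [Real.div_rpow (Real.rpow_nonneg (hg0 x) q) ha, Real.rpow_rpow_inv (hg0 x) hq0.ne',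
      le_div_iff₀ has] at h
    calc _ = (1 + s * (g x ^ q / a - 1) - (g x ^ q / a - 1) ^ 2) * a ^ s := by
          field_simp; ring
      _ ≤ g x := h
  have hmean : a ^ s * (1 - V / a ^ 2) ≤ ∫ x, g x ∂μ := by
    have := integral_mono ?_ hg hpointwise
    · rw [integral_centered_quadratic hgq hgq2] at this
      calc _ = a ^ s + -(a ^ s / a ^ 2) * V := by ring
        _ ≤ _ := this
    · exact ((integrable_const _).add ((hgq.sub (integrable_const _)).const_mul _)).add
        ((integrable_sub_sq hgq hgq2 a).const_mul _)
  have hbernoulli : a * (1 - q * (V / a ^ 2)) ≤ (∫ x, g x ∂μ) ^ q := by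
    have hnonneg : 0 ≤ 1 - V / a ^ 2 := by
      rw [sub_nonneg, div_le_one (by positivity)]; exact hsmall.le
    calc a * (1 - q * (V / a ^ 2)) ≤ a * (1 + -(V / a ^ 2)) ^ q := by
          gcongr
          have := one_add_mul_self_le_rpow_one_add (s := -(V / a ^ 2)) (by linarith) hq
          linarith
      _ = (a ^ s * (1 - V / a ^ 2)) ^ q := by
          rw [Real.mul_rpow has.le hnonneg, Real.rpow_inv_rpow ha hq0.ne', sub_eq_add_neg]
      _ ≤ (∫ x, g x ∂μ) ^ q := by gcongr
  have hsqrt : V / a ≤ √V := by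
    have hVa : √V ≤ a := (Real.sqrt_le_left ha).2 hsmall.le
    rw [div_le_iff₀ ha0]
    nlinarith [Real.sq_sqrt hV, Real.sqrt_nonneg V]
  calc a - (∫ x, g x ∂μ) ^ q ≤ q * (V / a) := by
        have : a * (1 - q * (V / a ^ 2)) = a - q * (V / a) := by field_simp
        linarith
    _ ≤ q * √V := by gcongr

lemma sq_integral_rpow_sub_rpow_integral_le {g : α → ℝ} (hg0 : ∀ x, 0 ≤ g x) {q : ℝ}
    (hq : 1 / 2 ≤ q) (hg : Integrable g μ) (hgq : Integrable (fun x => g x ^ q) μ)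
    (hgq2 : Integrable (fun x => (g x ^ q) ^ 2) μ) :
    (∫ x, g x ^ q ∂μ - (∫ x, g x ∂μ) ^ q) ^ 2
      ≤ max 1 q ^ 2 * ∫ x, (g x ^ q - ∫ y, g y ^ q ∂μ) ^ 2 ∂μ := by
  set V := ∫ x, (g x ^ q - ∫ y, g y ^ q ∂μ) ^ 2 ∂μ
  have hV : 0 ≤ V := integral_nonneg fun x => sq_nonneg _
  have hupper := rpow_integral_le_integral_rpow_add_sqrt hg0 hq hg hgq hgq2
  have hlower : ∫ x, g x ^ q ∂μ - (∫ x, g x ∂μ) ^ q ≤ max 1 q * √V := by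
    rcases le_total q 1 with hq1 | hq1
    · have := integral_rpow_le_rpow_integral hg0 (by linarith) hq1 hg hgq
      nlinarith [Real.sqrt_nonneg V, le_max_left 1 q]
    · calc _ ≤ q * √V := integral_rpow_sub_rpow_integral_le hg0 hq1 hg hgq hgq2
        _ ≤ max 1 q * √V := by gcongr; exact le_max_right 1 q
  calc _ ≤ (max 1 q * √V) ^ 2 :=
        sq_le_sq' (by nlinarith [Real.sqrt_nonneg V, le_max_left 1 q]) hlower
    _ = max 1 q ^ 2 * V := by rw [mul_pow, Real.sq_sqrt hV]

lemma integral_sq_sub_rpow_integral_le {g : α → ℝ} (hg0 : ∀ x, 0 ≤ g x) {q : ℝ}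
    (hq : 1 / 2 ≤ q) (hg : Integrable g μ) (hgq : Integrable (fun x => g x ^ q) μ)
    (hgq2 : Integrable (fun x => (g x ^ q) ^ 2) μ) :
    ∫ x, (g x ^ q - (∫ y, g y ∂μ) ^ q) ^ 2 ∂μ
      ≤ (1 + max 1 q ^ 2) * ∫ x, (g x ^ q - ∫ y, g y ^ q ∂μ) ^ 2 ∂μ := by
  rw [integral_sub_sq_eq_integral_sub_integral_sq_add hgq hgq2]
  linarith [sq_integral_rpow_sub_rpow_integral_le hg0 hq hg hgq hgq2]

end Probability

/-- For `q > 1/2` there are constants `c₀, c₁ > 0`, depending only on `q`, such that the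
mean square deviation of `g^q` from `((g)_E)^q` and from `(g^q)_E` are comparable. -/
theorem stmt_5 (q : ℝ) (hq : 1 / 2 < q) :
    ∃ c₀ c₁ : ℝ, 0 < c₀ ∧ 0 < c₁ ∧
      ∀ (n : ℕ) (E : Set (Fin n → ℝ)), MeasurableSet E →
        0 < volume E → volume E < ⊤ →
        ∀ g : (Fin n → ℝ) → ℝ, Measurable g → (∀ x, 0 ≤ g x) →
          IntegrableOn (fun x => g x ^ (2 * q)) E →
          (⨍ x in E, |g x ^ q - (⨍ y in E, g y) ^ q| ^ 2) ≤
              c₀ * ⨍ x in E, |g x ^ q - ⨍ y in E, g y ^ q| ^ 2 ∧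
            c₀ * (⨍ x in E, |g x ^ q - ⨍ y in E, g y ^ q| ^ 2) ≤
              c₁ * ⨍ x in E, |g x ^ q - (⨍ y in E, g y) ^ q| ^ 2 := by
  refine ⟨1 + max 1 q ^ 2, 1 + max 1 q ^ 2, by positivity, by positivity, ?_⟩
  intro n E _ hE0 hEtop g hg hg0 hint
  have : IsFiniteMeasure (volume.restrict E) := isFiniteMeasure_restrict.2 hEtop.ne
  have : NeZero (volume.restrict E) := ⟨by simpa [Measure.restrict_eq_zero] using hE0.ne'⟩
  set ν := (volume.restrict E Set.univ)⁻¹ • volume.restrict E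
  have hint' : Integrable (fun x => g x ^ (2 * q)) ν :=
    hint.smul_measure (ENNReal.inv_ne_top.2 (NeZero.ne _))
  have hgq : Integrable (fun x => g x ^ q) ν :=
    integrable_rpow_of_le hg hg0 (by linarith) (by linarith) hint'
  have hgq2 : Integrable (fun x => (g x ^ q) ^ 2) ν := by
    simpa only [Real.rpow_two_mul (hg0 _)] using hint'
  have hg1 : Integrable g ν := by
    simpa using integrable_rpow_of_le hg hg0 zero_le_one (by linarith) hint'
  simp only [average_eq', sq_abs]
  exact ⟨integral_sq_sub_rpow_integral_le hg0 hq.le hg1 hgq hgq2,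
    mul_le_mul_of_nonneg_left (integral_sub_integral_sq_le_integral_sub_sq hgq hgq2 _)
      (by positivity)⟩
end

section
/- Mean change for convex powers: let $E \subseteq \mathbb{R}^n$ be Lebesgue-measurable with $|E| < \infty$, let $\eta \in L^\infty(E)$ be nonnegative with $\|\eta\|_{L^1(E)} > 0$, let $m \in (0,1)$, $p \ge 1/m$, and let $u$ be a nonnegative measurable function on $E$ with $\int_E u^{mp}\,\eta\,dx < \infty$. Then there is a constant $c_0 > 0$ depending only on $m$ and $p$ such that $\Big(\frac{1}{\|\eta\|_{L^1(E)}}\int_E \big|u^m - \big((u)_E^\eta\big)^m\big|^p \eta\,dx\Big)^{1/p} \le c_0 \Big(\frac{1}{\|\eta\|_{L^1(E)}}\int_E \big|u^m - (u^m)_E^\eta\big|^p \eta\,dx\Big)^{1/p} \le 2 c_0 \Big(\frac{1}{\|\eta\|_{L^1(E)}}\int_E \big|u^m - \big((u)_E^\eta\big)^m\big|^p \eta\,dx\Big)^{1/p}$. -/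
/-!
Normalise `η dx` on `E` to a probability measure `ν` and put `v = u ^ m`, `q = 1 / m ≤ p`, so
that `‖v‖_{L^q(ν)} = ((u)_ν) ^ m`. Both bounds (with `c₀ = 2`) are triangle inequalities in
`L^p(ν)`. For any constant `c`, `|(v)_ν - c| ≤ ‖v - c‖_1 ≤ ‖v - c‖_p`, hence
`‖v - (v)_ν‖_p ≤ 2 ‖v - c‖_p`. Conversely `(v)_ν ≤ ‖v‖_q ≤ (v)_ν + ‖v - (v)_ν‖_q`, so the constant
`‖v‖_q = ((u)_ν) ^ m` lies within `‖v - (v)_ν‖_p` of `(v)_ν`, which gives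
`‖v - ((u)_ν) ^ m‖_p ≤ 2 ‖v - (v)_ν‖_p`.
-/

open MeasureTheory
open scoped ENNReal

namespace MeasureTheory

section Lp

variable {α : Type*} [MeasurableSpace α] {μ : Measure α} {u : α → ℝ} {m : ℝ}

lemma eLpNorm_rpow_ofReal_inv (hu0 : 0 ≤ᵐ[μ] u) (hm : 0 < m) :
    eLpNorm (fun x => u x ^ m) (ENNReal.ofReal m⁻¹) μ = eLpNorm u 1 μ ^ m := by
  have hnorm : (fun x => u x ^ m) =ᵐ[μ] fun x => ‖u x‖ ^ m :=
    hu0.mono fun x hx => by simp only [Real.norm_of_nonneg hx]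
  rw [eLpNorm_congr_ae hnorm, eLpNorm_norm_rpow u hm, ← ENNReal.ofReal_mul (inv_nonneg.2 hm.le),
    inv_mul_cancel₀ hm.ne', ENNReal.ofReal_one]

lemma toReal_eLpNorm_rpow_ofReal_inv (hu : AEStronglyMeasurable u μ) (hu0 : 0 ≤ᵐ[μ] u)
    (hm : 0 < m) :
    (eLpNorm (fun x => u x ^ m) (ENNReal.ofReal m⁻¹) μ).toReal = (∫ x, u x ∂μ) ^ m := by
  rw [eLpNorm_rpow_ofReal_inv hu0 hm, ← ENNReal.toReal_rpow, eLpNorm_one_eq_lintegral_enorm,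
    ← integral_norm_eq_lintegral_enorm hu,
    integral_congr_ae (hu0.mono fun x hx => Real.norm_of_nonneg hx)]

lemma toReal_eLpNorm_ofReal {f : α → ℝ} {p : ℝ} (hp : 0 < p)
    (hf : MemLp f (ENNReal.ofReal p) μ) :
    (eLpNorm f (ENNReal.ofReal p) μ).toReal = (∫ x, |f x| ^ p ∂μ) ^ (1 / p) := by
  rw [hf.eLpNorm_eq_integral_rpow_norm (by simpa using hp) ENNReal.ofReal_ne_top,
    ENNReal.toReal_ofReal (by positivity), ENNReal.toReal_ofReal hp.le, one_div]
  rfl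

end Lp

section Weighted

variable {α : Type*} [MeasurableSpace α] {μ : Measure α} {w : α → ℝ}

noncomputable def weightedProb (μ : Measure α) (w : α → ℝ) : Measure α :=
  μ.withDensity fun x => ENNReal.ofReal (w x / ∫ y, w y ∂μ)

lemma integral_weightedProb (hw : AEMeasurable w μ) (hw0 : 0 ≤ᵐ[μ] w) (g : α → ℝ) :
    ∫ x, g x ∂weightedProb μ w = (∫ x, g x * w x ∂μ) / ∫ x, w x ∂μ := by
  have hI : 0 ≤ ∫ x, w x ∂μ := integral_nonneg_of_ae hw0
  rw [weightedProb, integral_withDensity_eq_integral_toReal_smul₀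
    (hw.div_const _).ennreal_ofReal (ae_of_all _ fun _ => ENNReal.ofReal_lt_top), ← integral_div]
  refine integral_congr_ae (hw0.mono fun x hx => ?_)
  dsimp only
  rw [ENNReal.toReal_ofReal (div_nonneg hx hI), smul_eq_mul]
  ring

lemma integrable_weightedProb_iff (hw : AEMeasurable w μ) (hw0 : 0 ≤ᵐ[μ] w)
    (hI : 0 < ∫ x, w x ∂μ) {g : α → ℝ} :
    Integrable g (weightedProb μ w) ↔ Integrable (fun x => g x * w x) μ := by
  rw [weightedProb, integrable_withDensity_iff_integrable_smul₀'
    (hw.div_const _).ennreal_ofReal (ae_of_all _ fun _ => ENNReal.ofReal_lt_top),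
    ← integrable_mul_const_iff (isUnit_iff_ne_zero.2 (inv_ne_zero hI.ne')) (fun x => g x * w x)]
  refine integrable_congr (hw0.mono fun x hx => ?_)
  dsimp only
  rw [ENNReal.toReal_ofReal (div_nonneg hx hI.le), smul_eq_mul]
  ring

lemma isProbabilityMeasure_weightedProb (hw : Integrable w μ) (hw0 : 0 ≤ᵐ[μ] w)
    (hI : 0 < ∫ x, w x ∂μ) : IsProbabilityMeasure (weightedProb μ w) := by
  constructor
  rw [weightedProb, withDensity_apply _ MeasurableSet.univ, Measure.restrict_univ,
    ← ofReal_integral_eq_lintegral_ofReal (hw.div_const _)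
      (hw0.mono fun x hx => div_nonneg hx hI.le), integral_div, div_self hI.ne',
    ENNReal.ofReal_one]

lemma memLp_weightedProb_iff (hw : AEMeasurable w μ) (hw0 : 0 ≤ᵐ[μ] w) (hI : 0 < ∫ x, w x ∂μ)
    {f : α → ℝ} {p : ℝ} (hp : 0 < p) (hf : AEStronglyMeasurable f (weightedProb μ w)) :
    MemLp f (ENNReal.ofReal p) (weightedProb μ w) ↔ Integrable (fun x => |f x| ^ p * w x) μ := by
  rw [← integrable_norm_rpow_iff hf (by simpa using hp) ENNReal.ofReal_ne_top,
    integrable_weightedProb_iff hw hw0 hI, ENNReal.toReal_ofReal hp.le]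
  rfl

lemma toReal_eLpNorm_weightedProb (hw : AEMeasurable w μ) (hw0 : 0 ≤ᵐ[μ] w) {f : α → ℝ} {p : ℝ}
    (hp : 0 < p) (hf : MemLp f (ENNReal.ofReal p) (weightedProb μ w)) :
    (eLpNorm f (ENNReal.ofReal p) (weightedProb μ w)).toReal
      = ((∫ x, |f x| ^ p * w x ∂μ) / ∫ x, w x ∂μ) ^ (1 / p) := by
  rw [toReal_eLpNorm_ofReal hp hf, integral_weightedProb hw hw0]

end Weighted

section ProbabilitySpace

variable {α : Type*} [MeasurableSpace α] {μ : Measure α} [IsProbabilityMeasure μ]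
  {f : α → ℝ} {p : ℝ≥0∞}

lemma eLpNorm_sub_const_le (hf : AEStronglyMeasurable f μ) (hp : 1 ≤ p) (a b : ℝ) :
    eLpNorm (fun x => f x - a) p μ ≤ eLpNorm (fun x => f x - b) p μ + ‖b - a‖ₑ := by
  have hsplit : (fun x => f x - a) = (fun x => f x - b) + fun _ => b - a := by
    funext x; simp only [Pi.add_apply]; ring
  rw [hsplit]
  refine (eLpNorm_add_le (hf.sub aestronglyMeasurable_const) aestronglyMeasurable_const hp).trans ?_
  rw [eLpNorm_const _ (by positivity) (IsProbabilityMeasure.ne_zero μ), measure_univ,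
    ENNReal.one_rpow, mul_one]
  exact le_rfl

lemma enorm_integral_sub_le_eLpNorm (hf : Integrable f μ) (hp : 1 ≤ p) (c : ℝ) :
    ‖(∫ x, f x ∂μ) - c‖ₑ ≤ eLpNorm (fun x => f x - c) p μ := by
  have hmean : (∫ x, f x ∂μ) - c = ∫ x, (f x - c) ∂μ := by
    rw [integral_sub hf (integrable_const c), integral_const, probReal_univ, one_smul]
  calc ‖(∫ x, f x ∂μ) - c‖ₑ ≤ ∫⁻ x, ‖f x - c‖ₑ ∂μ := hmean ▸ enorm_integral_le_lintegral_enorm _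
    _ = eLpNorm (fun x => f x - c) 1 μ := eLpNorm_one_eq_lintegral_enorm.symm
    _ ≤ eLpNorm (fun x => f x - c) p μ :=
      eLpNorm_le_eLpNorm_of_exponent_le hp (hf.1.sub aestronglyMeasurable_const)

lemma eLpNorm_sub_integral_le_two_mul (hf : Integrable f μ) (hp : 1 ≤ p) (c : ℝ) :
    eLpNorm (fun x => f x - ∫ y, f y ∂μ) p μ ≤ 2 * eLpNorm (fun x => f x - c) p μ := by
  calc eLpNorm (fun x => f x - ∫ y, f y ∂μ) p μ
      ≤ eLpNorm (fun x => f x - c) p μ + ‖c - ∫ y, f y ∂μ‖ₑ := eLpNorm_sub_const_le hf.1 hp _ _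
    _ ≤ eLpNorm (fun x => f x - c) p μ + eLpNorm (fun x => f x - c) p μ := by
      rw [enorm_sub_rev]; gcongr; exact enorm_integral_sub_le_eLpNorm hf hp c
    _ = 2 * eLpNorm (fun x => f x - c) p μ := (two_mul _).symm

lemma eLpNorm_sub_toReal_eLpNorm_le_two_mul {q : ℝ≥0∞} (hf : MemLp f q μ) (hq : 1 ≤ q)
    (hqp : q ≤ p) (hf0 : 0 ≤ ∫ x, f x ∂μ) :
    eLpNorm (fun x => f x - (eLpNorm f q μ).toReal) p μ
      ≤ 2 * eLpNorm (fun x => f x - ∫ y, f y ∂μ) p μ := by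
  set a := ∫ x, f x ∂μ
  set N := eLpNorm f q μ
  set D := eLpNorm (fun x => f x - a) p μ
  have hN : N ≠ ∞ := hf.eLpNorm_ne_top
  have hfa : AEStronglyMeasurable (fun x => f x - a) μ := hf.1.sub aestronglyMeasurable_const
  have ha_le : ENNReal.ofReal a ≤ N := by
    have h := enorm_integral_sub_le_eLpNorm (hf.integrable hq) hq 0
    simp only [sub_zero] at h
    rwa [Real.enorm_of_nonneg hf0] at h
  have hN_le : N ≤ D + ENNReal.ofReal a := by
    calc N ≤ eLpNorm (fun x => f x - a) q μ + ‖a - 0‖ₑ := by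
          simpa using eLpNorm_sub_const_le hf.1 hq 0 a
      _ ≤ D + ENNReal.ofReal a := by
          rw [sub_zero, Real.enorm_of_nonneg hf0]
          gcongr
          exact eLpNorm_le_eLpNorm_of_exponent_le hqp hfa
  have hgap : ‖a - N.toReal‖ₑ ≤ D := by
    have ha_le' : a ≤ N.toReal := by
      simpa [ENNReal.toReal_ofReal hf0] using ENNReal.toReal_mono hN ha_le
    rw [enorm_sub_rev, Real.enorm_of_nonneg (sub_nonneg.mpr ha_le'), ENNReal.ofReal_sub _ hf0,
      ENNReal.ofReal_toReal hN, tsub_le_iff_right]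
    exact hN_le
  calc eLpNorm (fun x => f x - N.toReal) p μ ≤ D + ‖a - N.toReal‖ₑ :=
        eLpNorm_sub_const_le hf.1 (hq.trans hqp) _ _
    _ ≤ D + D := by gcongr
    _ = 2 * D := (two_mul _).symm

lemma eLpNorm_rpow_sub_integral_rpow_le_two_mul {u : α → ℝ} {m : ℝ} (hm0 : 0 < m) (hm1 : m ≤ 1)
    (hmp : ENNReal.ofReal m⁻¹ ≤ p) (hu : AEStronglyMeasurable u μ) (hu0 : 0 ≤ᵐ[μ] u)
    (hv : MemLp (fun x => u x ^ m) p μ) :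
    eLpNorm (fun x => u x ^ m - (∫ y, u y ∂μ) ^ m) p μ
      ≤ 2 * eLpNorm (fun x => u x ^ m - ∫ y, u y ^ m ∂μ) p μ := by
  have hq : 1 ≤ ENNReal.ofReal m⁻¹ := ENNReal.one_le_ofReal.mpr (one_le_inv₀ hm0 |>.mpr hm1)
  rw [← toReal_eLpNorm_rpow_ofReal_inv hu hu0 hm0]
  exact eLpNorm_sub_toReal_eLpNorm_le_two_mul (hv.mono_exponent hmp) hq hmp
    (integral_nonneg_of_ae (hu0.mono fun x hx => Real.rpow_nonneg hx m))

end ProbabilitySpace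

end MeasureTheory

/-- Mean change for convex powers: for `m ∈ (0,1)` and `p ≥ 1/m` there is a constant
`c₀ > 0`, depending only on `m` and `p`, such that the weighted `L^p` deviation of `u^m`
from `((u)_E^η)^m` and from `(u^m)_E^η` are comparable (with constants `c₀` and `2c₀`). -/
theorem stmt_7 (m p : ℝ) (hm0 : 0 < m) (hm1 : m < 1) (hp : 1 / m ≤ p) :
    ∃ c₀ : ℝ, 0 < c₀ ∧
      ∀ (n : ℕ) (E : Set (Fin n → ℝ)), MeasurableSet E → volume E < ⊤ →
        ∀ η u : (Fin n → ℝ) → ℝ, Measurable η → (∀ x ∈ E, 0 ≤ η x) →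
          (∃ C : ℝ, ∀ x ∈ E, η x ≤ C) → 0 < ∫ x in E, η x →
          Measurable u → (∀ x, 0 ≤ u x) →
          IntegrableOn (fun x => u x ^ (m * p) * η x) E →
          (((∫ x in E, |u x ^ m - ((∫ y in E, u y * η y) / (∫ y in E, η y)) ^ m| ^ p * η x) /
              (∫ x in E, η x)) ^ (1 / p) ≤
            c₀ * ((∫ x in E,
                |u x ^ m - (∫ y in E, u y ^ m * η y) / (∫ y in E, η y)| ^ p * η x) /
              (∫ x in E, η x)) ^ (1 / p) ∧
          c₀ * ((∫ x in E,
                |u x ^ m - (∫ y in E, u y ^ m * η y) / (∫ y in E, η y)| ^ p * η x) /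
              (∫ x in E, η x)) ^ (1 / p) ≤
            2 * c₀ * ((∫ x in E,
                |u x ^ m - ((∫ y in E, u y * η y) / (∫ y in E, η y)) ^ m| ^ p * η x) /
              (∫ x in E, η x)) ^ (1 / p)) := by
  refine ⟨2, two_pos, ?_⟩
  intro n E hE hEfin η u hη hη0 ⟨C, hC⟩ hI hu hu0 hint
  have hη0' : 0 ≤ᵐ[volume.restrict E] η := ae_restrict_of_forall_mem hE hη0
  have hηint : IntegrableOn η E :=
    Measure.integrableOn_of_bounded hEfin.ne hη.aestronglyMeasurable
      (ae_restrict_of_forall_mem hE fun x hx => (Real.norm_of_nonneg (hη0 x hx)).trans_le (hC x hx))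
  set ν := weightedProb (volume.restrict E) η
  have := isProbabilityMeasure_weightedProb hηint hη0' hI
  have hp1 : 1 ≤ p := (one_le_one_div hm0 hm1.le).trans hp
  have hp0 : 0 < p := zero_lt_one.trans_le hp1
  have hp1' : 1 ≤ ENNReal.ofReal p := ENNReal.one_le_ofReal.mpr hp1
  have hv : MemLp (fun x => u x ^ m) (ENNReal.ofReal p) ν := by
    rw [memLp_weightedProb_iff hη.aemeasurable hη0' hI hp0 (hu.pow_const m).aestronglyMeasurable]
    simp only [abs_of_nonneg (Real.rpow_nonneg (hu0 _) m), ← Real.rpow_mul (hu0 _)]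
    exact hint
  have hdev (c : ℝ) : MemLp (fun x => u x ^ m - c) (ENNReal.ofReal p) ν :=
    hv.sub (memLp_const c)
  rw [← integral_weightedProb hη.aemeasurable hη0' u,
    ← integral_weightedProb hη.aemeasurable hη0' (fun x => u x ^ m),
    ← toReal_eLpNorm_weightedProb hη.aemeasurable hη0' hp0 (hdev _),
    ← toReal_eLpNorm_weightedProb hη.aemeasurable hη0' hp0 (hdev _)]
  have hpow := eLpNorm_rpow_sub_integral_rpow_le_two_mul hm0 hm1.le
    (ENNReal.ofReal_le_ofReal (by simpa only [one_div] using hp)) hu.aestronglyMeasurable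
    (ae_of_all _ hu0) hv
  have hmean := eLpNorm_sub_integral_le_two_mul (hv.integrable hp1') hp1' ((∫ y, u y ∂ν) ^ m)
  have toReal_le {a b : ℝ≥0∞} (hb : b ≠ ∞) (h : a ≤ 2 * b) : a.toReal ≤ 2 * b.toReal := by
    simpa using ENNReal.toReal_mono (ENNReal.mul_ne_top (by simp) hb) h
  have h1 := toReal_le (hdev _).eLpNorm_ne_top hpow
  have h2 := toReal_le (hdev _).eLpNorm_ne_top hmean
  constructor <;> linarith
end

section
/- Let $E \subseteq \mathbb{R}^n$ be Lebesgue-measurable with $|E| < \infty$, let $\eta \in L^\infty(E)$ be nonnegative with $\|\eta\|_{L^1(E)} > 0$, let $m \in (0,1)$, and let $u$ be a nonnegative measurable function on $E$ with $u\eta \in L^1(E)$; set $\lambda := (u)_E^\eta$. Then there is a constant $c > 0$ depending only on $m$ such that for every $a > 0$, $\big|a^m - \lambda^m\big| \le \frac{c}{\|\eta\|_{L^1(E)}}\int_E |u^m - a^m|\,\chi_{\{u \le 2a\}}\,\eta\,dx \; + \; c\,\Big(\frac{1}{\|\eta\|_{L^1(E)}}\int_E |u^m - a^m|^{1/m}\,\chi_{\{u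 > 2a\}}\,\eta\,dx\Big)^{m}$. -/
/-!
Write `λ` for the weighted mean; then `|λ - a|` is at most the weighted mean of `|u - a|`, which
is bounded pointwise. On `{u ≤ 2a}` the tangent lines of the concave map `t ↦ t ^ m` over
`[0, 2a]` have slope at least `m (2a)^(m-1)`, so `|u - a| ≲ a^(1-m) |u^m - a^m|`; on `{u > 2a}`
one has `a^m ≤ 2^(-m) u^m`, so `|u - a| ≤ u ≲ |u^m - a^m|^(1/m)`. Finally
`|a^m - λ^m| ≤ min (a^(m-1) |λ - a|, |λ - a|^m)`; splitting `|λ - a| ≤ x + y` along the two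
sets, the first bound handles `x` and the second handles `y`.
-/

open MeasureTheory Real

section Scalar

variable {m a b t x y u : ℝ}

lemma one_sub_two_rpow_neg_pos (hm : 0 < m) : 0 < 1 - (2 : ℝ) ^ (-m) := by
  linarith [rpow_lt_one_of_one_lt_of_neg one_lt_two (neg_neg_of_pos hm)]

lemma rpow_sub_one_mul_le_rpow (hm1 : m ≤ 1) (ha : 0 < a) (ht : 0 ≤ t) (hta : t ≤ a) :
    a ^ (m - 1) * t ≤ t ^ m := by
  have key : t / a ≤ (t / a) ^ m :=
    self_le_rpow_of_le_one (div_nonneg ht ha.le) (div_le_one_of_le₀ hta ha.le) hm1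
  calc a ^ (m - 1) * t = a ^ m * (t / a) := by rw [rpow_sub_one ha.ne']; ring
    _ ≤ a ^ m * (t / a) ^ m := by gcongr
    _ = t ^ m := by rw [div_rpow ht ha.le, mul_div_cancel₀ _ (rpow_pos_of_pos ha m).ne']

lemma rpow_le_rpow_sub_one_mul (hm1 : m ≤ 1) (ha : 0 < a) (hat : a ≤ t) :
    t ^ m ≤ a ^ (m - 1) * t := by
  have key : (t / a) ^ m ≤ t / a := rpow_le_self_of_one_le ((one_le_div ha).2 hat) hm1
  calc t ^ m = a ^ m * (t / a) ^ m := by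
        rw [div_rpow (ha.le.trans hat) ha.le, mul_div_cancel₀ _ (rpow_pos_of_pos ha m).ne']
    _ ≤ a ^ m * (t / a) := by gcongr
    _ = a ^ (m - 1) * t := by rw [rpow_sub_one ha.ne']; ring

lemma abs_rpow_sub_rpow_le_rpow_sub_one_mul (hm0 : 0 ≤ m) (hm1 : m ≤ 1) (ha : 0 < a)
    (hb : 0 ≤ b) : |b ^ m - a ^ m| ≤ a ^ (m - 1) * |b - a| := by
  have ham : a ^ (m - 1) * a = a ^ m := by rw [rpow_sub_one ha.ne', div_mul_cancel₀ _ ha.ne']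
  rcases le_total a b with hab | hba
  · rw [abs_of_nonneg (sub_nonneg.2 (rpow_le_rpow ha.le hab hm0)),
      abs_of_nonneg (sub_nonneg.2 hab), mul_sub, ham]
    linarith [rpow_le_rpow_sub_one_mul hm1 ha hab]
  · rw [abs_of_nonpos (sub_nonpos.2 (rpow_le_rpow hb hba hm0)),
      abs_of_nonpos (sub_nonpos.2 hba), mul_neg, mul_sub, ham]
    linarith [rpow_sub_one_mul_le_rpow hm1 ha hb hba]

lemma abs_rpow_sub_rpow_le_abs_sub_rpow (hm0 : 0 ≤ m) (hm1 : m ≤ 1) (hx : 0 ≤ x)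
    (hy : 0 ≤ y) : |x ^ m - y ^ m| ≤ |x - y| ^ m := by
  wlog hyx : y ≤ x generalizing x y
  · rw [abs_sub_comm, abs_sub_comm x]
    exact this hy hx (le_of_not_ge hyx)
  have hsub : x ^ m ≤ (x - y) ^ m + y ^ m := by
    simpa using rpow_add_le_add_rpow (sub_nonneg.2 hyx) hy hm0 hm1
  rw [abs_of_nonneg (sub_nonneg.2 (rpow_le_rpow hy hyx hm0)), abs_of_nonneg (sub_nonneg.2 hyx)]
  linarith

/-- The tangent of the concave map `t ↦ t ^ m` at the larger point lies above the graph. -/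
lemma mul_max_rpow_sub_one_mul_abs_sub_le (hm0 : 0 ≤ m) (hm1 : m ≤ 1) (hx : 0 ≤ x)
    (hy : 0 ≤ y) : m * max x y ^ (m - 1) * |x - y| ≤ |x ^ m - y ^ m| := by
  wlog hyx : y ≤ x generalizing x y
  · rw [max_comm, abs_sub_comm, abs_sub_comm (x ^ m)]
    exact this hy hx (le_of_not_ge hyx)
  rw [max_eq_left hyx, abs_of_nonneg (sub_nonneg.2 hyx),
    abs_of_nonneg (sub_nonneg.2 (rpow_le_rpow hy hyx hm0))]
  rcases hx.eq_or_lt with rfl | hx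
  · simp [le_antisymm hyx hy]
  have hbern : (y / x) ^ m ≤ 1 + m * (y / x - 1) := by
    simpa using rpow_one_add_le_one_add_mul_self (s := y / x - 1)
      (by linarith [div_nonneg hy hx.le]) hm0 hm1
  have hscale : y ^ m = x ^ m * (y / x) ^ m := by
    rw [div_rpow hy hx.le, mul_div_cancel₀ _ (rpow_pos_of_pos hx m).ne']
  calc m * x ^ (m - 1) * (x - y) = x ^ m - x ^ m * (1 + m * (y / x - 1)) := by
        rw [rpow_sub_one hx.ne']; field_simp; ring
    _ ≤ x ^ m - x ^ m * (y / x) ^ m := by gcongr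
    _ = x ^ m - y ^ m := by rw [hscale]

lemma abs_rpow_sub_rpow_le_of_abs_sub_le_add (hm0 : 0 ≤ m) (hm1 : m ≤ 1) (ha : 0 < a)
    (hb : 0 ≤ b) (hx : 0 ≤ x) (hy : 0 ≤ y) (h : |b - a| ≤ x + y) :
    |a ^ m - b ^ m| ≤ a ^ (m - 1) * x + 2 * y ^ m := by
  have hym : 0 ≤ y ^ m := rpow_nonneg hy m
  rcases le_or_gt y a with hya | hay
  · calc |a ^ m - b ^ m| ≤ a ^ (m - 1) * |b - a| := by
          rw [abs_sub_comm]; exact abs_rpow_sub_rpow_le_rpow_sub_one_mul hm0 hm1 ha hb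
      _ ≤ a ^ (m - 1) * x + a ^ (m - 1) * y := by
          rw [← mul_add]; gcongr
      _ ≤ a ^ (m - 1) * x + 2 * y ^ m := by
          linarith [rpow_sub_one_mul_le_rpow hm1 ha hy hya]
  · have hxm : x ^ m ≤ a ^ (m - 1) * x + y ^ m := by
      rcases le_total a x with hax | hxa
      · linarith [rpow_le_rpow_sub_one_mul hm1 ha hax]
      · have : 0 ≤ a ^ (m - 1) * x := by positivity
        linarith [rpow_le_rpow hx (hxa.trans hay.le) hm0]
    calc |a ^ m - b ^ m| ≤ |a - b| ^ m := abs_rpow_sub_rpow_le_abs_sub_rpow hm0 hm1 ha.le hb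
      _ ≤ (x + y) ^ m := by rw [abs_sub_comm]; gcongr
      _ ≤ x ^ m + y ^ m := rpow_add_le_add_rpow hx hy hm0 hm1
      _ ≤ a ^ (m - 1) * x + 2 * y ^ m := by linarith

lemma abs_sub_le_mul_abs_rpow_sub_rpow_of_le_two_mul (hm0 : 0 < m) (hm1 : m ≤ 1) (ha : 0 < a)
    (hu : 0 ≤ u) (hua : u ≤ 2 * a) :
    |u - a| ≤ 2 ^ (1 - m) / m * a ^ (1 - m) * |u ^ m - a ^ m| := by
  have hmax : (2 * a) ^ (m - 1) ≤ max u a ^ (m - 1) :=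
    rpow_le_rpow_of_nonpos (lt_max_of_lt_right ha) (max_le hua (by linarith)) (by linarith)
  have htangent : m * (2 * a) ^ (m - 1) * |u - a| ≤ |u ^ m - a ^ m| :=
    le_trans (by gcongr) (mul_max_rpow_sub_one_mul_abs_sub_le hm0.le hm1 hu ha.le)
  have hinv : 2 ^ (1 - m) / m * a ^ (1 - m) * (m * (2 * a) ^ (m - 1)) = 1 := by
    have h : (2 * a) ^ (1 - m) * (2 * a) ^ (m - 1) = 1 := by rw [← rpow_add (by positivity)]; simp
    rw [mul_rpow zero_le_two ha.le] at h
    field_simp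
    linear_combination h
  calc |u - a| = 2 ^ (1 - m) / m * a ^ (1 - m) * (m * (2 * a) ^ (m - 1) * |u - a|) := by
        rw [← mul_assoc, hinv, one_mul]
    _ ≤ 2 ^ (1 - m) / m * a ^ (1 - m) * |u ^ m - a ^ m| := by gcongr

lemma abs_sub_le_mul_abs_rpow_sub_rpow_of_two_mul_lt (hm0 : 0 < m) (ha : 0 ≤ a)
    (hau : 2 * a < u) :
    |u - a| ≤ ((1 - 2 ^ (-m))⁻¹) ^ (1 / m) * |u ^ m - a ^ m| ^ (1 / m) := by
  have hu : 0 ≤ u := by linarith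
  have hd := one_sub_two_rpow_neg_pos hm0
  have ham : a ^ m ≤ 2 ^ (-m) * u ^ m := by
    calc a ^ m ≤ (2⁻¹ * u) ^ m := by gcongr; linarith
      _ = 2 ^ (-m) * u ^ m := by
          rw [mul_rpow (by norm_num) hu, inv_rpow zero_le_two, rpow_neg zero_le_two]
  have hum : u ^ m ≤ (1 - 2 ^ (-m))⁻¹ * |u ^ m - a ^ m| := by
    rw [abs_of_nonneg (sub_nonneg.2 (rpow_le_rpow ha (by linarith) hm0.le)),
      inv_mul_eq_div, le_div_iff₀ hd]
    linarith
  calc |u - a| ≤ u := abs_sub_le_of_nonneg_of_le hu le_rfl ha (by linarith)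
    _ = (u ^ m) ^ (1 / m) := by rw [← rpow_mul hu, mul_one_div_cancel hm0.ne', rpow_one]
    _ ≤ ((1 - 2 ^ (-m))⁻¹ * |u ^ m - a ^ m|) ^ (1 / m) := by gcongr
    _ = ((1 - 2 ^ (-m))⁻¹) ^ (1 / m) * |u ^ m - a ^ m| ^ (1 / m) :=
        mul_rpow (inv_nonneg.2 hd.le) (abs_nonneg _)

end Scalar

section WeightedMean

variable {α : Type*} [MeasurableSpace α] {μ : Measure α} {u η : α → ℝ} {m a : ℝ}

lemma abs_integral_mul_div_integral_sub_le (hη : Integrable η μ)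
    (huη : Integrable (fun x => u x * η x) μ) (hη0 : 0 ≤ᵐ[μ] η) (hI : 0 < ∫ x, η x ∂μ) :
    |(∫ x, u x * η x ∂μ) / (∫ x, η x ∂μ) - a| ≤
      (∫ x, |u x - a| * η x ∂μ) / ∫ x, η x ∂μ := by
  have hsub : (∫ x, u x * η x ∂μ) / (∫ x, η x ∂μ) - a
      = (∫ x, (u x - a) * η x ∂μ) / ∫ x, η x ∂μ := by
    simp_rw [sub_mul]
    rw [integral_sub huη (hη.const_mul a), integral_const_mul]
    field_simp
  rw [hsub, abs_div, abs_of_pos hI]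
  gcongr
  refine abs_integral_le_integral_abs.trans_eq (integral_congr_ae ?_)
  filter_upwards [hη0] with x hx
  rw [abs_mul, abs_of_nonneg hx]

lemma integrable_indicator_le_two_mul (hm0 : 0 ≤ m) (ha : 0 ≤ a) (hu : Measurable u)
    (hu0 : ∀ x, 0 ≤ u x) (hη : Integrable η μ) :
    Integrable ({x | u x ≤ 2 * a}.indicator fun x => |u x ^ m - a ^ m| * η x) μ := by
  refine Integrable.mono' (hη.norm.const_mul ((2 * a) ^ m)) ?_ (ae_of_all _ fun x => ?_)
  · have hf : Measurable fun x => |u x ^ m - a ^ m| := by fun_prop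
    exact (hf.aestronglyMeasurable.mul hη.aestronglyMeasurable).indicator
      (measurableSet_le hu measurable_const)
  rw [Set.indicator_apply]
  split_ifs with hx
  · rw [norm_mul, Real.norm_eq_abs, abs_abs]
    gcongr
    exact abs_sub_le_of_nonneg_of_le (rpow_nonneg (hu0 x) m) (rpow_le_rpow (hu0 x) hx hm0)
      (rpow_nonneg ha m) (rpow_le_rpow ha (by linarith) hm0)
  · simp only [norm_zero]; positivity

lemma integrable_indicator_two_mul_lt (hm0 : 0 < m) (ha : 0 ≤ a) (hu : Measurable u)
    (hu0 : ∀ x, 0 ≤ u x) (hη : Integrable η μ) (huη : Integrable (fun x => u x * η x) μ) :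
    Integrable ({x | 2 * a < u x}.indicator fun x => |u x ^ m - a ^ m| ^ (1 / m) * η x) μ := by
  refine Integrable.mono' huη.norm ?_ (ae_of_all _ fun x => ?_)
  · have hf : Measurable fun x => |u x ^ m - a ^ m| ^ (1 / m) := by fun_prop
    exact (hf.aestronglyMeasurable.mul hη.aestronglyMeasurable).indicator
      (measurableSet_lt measurable_const hu)
  rw [Set.indicator_apply]
  split_ifs with hx
  · simp only [norm_mul, Real.norm_eq_abs, abs_of_nonneg (hu0 x)]
    rw [abs_of_nonneg (by positivity)]
    gcongr
    calc |u x ^ m - a ^ m| ^ (1 / m) ≤ (u x ^ m) ^ (1 / m) := by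
          gcongr
          exact abs_sub_le_of_nonneg_of_le (rpow_nonneg (hu0 x) m) le_rfl
            (rpow_nonneg ha m)
            (rpow_le_rpow ha (by linarith [show 2 * a < u x from hx]) hm0.le)
      _ = u x := by rw [← rpow_mul (hu0 x), mul_one_div_cancel hm0.ne', rpow_one]
  · simp only [norm_zero]; positivity

lemma integral_abs_sub_mul_le (hm0 : 0 < m) (hm1 : m ≤ 1) (ha : 0 < a) (hu0 : ∀ x, 0 ≤ u x)
    (hη0 : 0 ≤ᵐ[μ] η)
    (h₁ : Integrable ({x | u x ≤ 2 * a}.indicator fun x => |u x ^ m - a ^ m| * η x) μ)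
    (h₂ : Integrable
      ({x | 2 * a < u x}.indicator fun x => |u x ^ m - a ^ m| ^ (1 / m) * η x) μ) :
    ∫ x, |u x - a| * η x ∂μ ≤
      2 ^ (1 - m) / m * a ^ (1 - m) *
          ∫ x, {x | u x ≤ 2 * a}.indicator (fun x => |u x ^ m - a ^ m| * η x) x ∂μ +
        ((1 - 2 ^ (-m))⁻¹) ^ (1 / m) *
          ∫ x, {x | 2 * a < u x}.indicator (fun x => |u x ^ m - a ^ m| ^ (1 / m) * η x) x ∂μ := by
  rw [← integral_const_mul, ← integral_const_mul,
    ← integral_add (h₁.const_mul _) (h₂.const_mul _)]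
  refine integral_mono_of_nonneg (hη0.mono fun x hx => mul_nonneg (abs_nonneg _) hx)
    ((h₁.const_mul _).add (h₂.const_mul _)) ?_
  filter_upwards [hη0] with x hx
  rcases le_or_gt (u x) (2 * a) with hua | hau
  · rw [Set.indicator_of_mem (show x ∈ {x | u x ≤ 2 * a} from hua),
      Set.indicator_of_notMem (show x ∉ {x | 2 * a < u x} from not_lt.2 hua), mul_zero, add_zero,
      ← mul_assoc]
    gcongr
    exact abs_sub_le_mul_abs_rpow_sub_rpow_of_le_two_mul hm0 hm1 ha (hu0 x) hua
  · rw [Set.indicator_of_notMem (show x ∉ {x | u x ≤ 2 * a} from not_le.2 hau),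
      Set.indicator_of_mem (show x ∈ {x | 2 * a < u x} from hau), mul_zero, zero_add,
      ← mul_assoc]
    gcongr
    exact abs_sub_le_mul_abs_rpow_sub_rpow_of_two_mul_lt hm0 ha.le hau

theorem abs_rpow_sub_rpow_integral_mul_div_integral_le (hm0 : 0 < m) (hm1 : m ≤ 1) (ha : 0 < a)
    (hu : Measurable u) (hu0 : ∀ x, 0 ≤ u x) (hη : Integrable η μ) (hη0 : 0 ≤ᵐ[μ] η)
    (hI : 0 < ∫ x, η x ∂μ) (huη : Integrable (fun x => u x * η x) μ) :
    |a ^ m - ((∫ x, u x * η x ∂μ) / ∫ x, η x ∂μ) ^ m| ≤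
      (2 ^ (1 - m) / m + 2 * (1 - 2 ^ (-m))⁻¹) *
          ((∫ x, {x | u x ≤ 2 * a}.indicator (fun x => |u x ^ m - a ^ m| * η x) x ∂μ) /
            ∫ x, η x ∂μ) +
        (2 ^ (1 - m) / m + 2 * (1 - 2 ^ (-m))⁻¹) *
          ((∫ x, {x | 2 * a < u x}.indicator
              (fun x => |u x ^ m - a ^ m| ^ (1 / m) * η x) x ∂μ) / ∫ x, η x ∂μ) ^ m := by
  set I := ∫ x, η x ∂μ
  set A := (∫ x, {x | u x ≤ 2 * a}.indicator (fun x => |u x ^ m - a ^ m| * η x) x ∂μ) / I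
  set B := (∫ x, {x | 2 * a < u x}.indicator
    (fun x => |u x ^ m - a ^ m| ^ (1 / m) * η x) x ∂μ) / I
  set κ : ℝ := ((1 - 2 ^ (-m))⁻¹) ^ (1 / m)
  have hd := one_sub_two_rpow_neg_pos hm0
  have hA : 0 ≤ A := div_nonneg (integral_nonneg_of_ae (hη0.mono fun x (hx : 0 ≤ η x) => by
    simp only [Set.indicator_apply]; split_ifs <;> positivity)) hI.le
  have hB : 0 ≤ B := div_nonneg (integral_nonneg_of_ae (hη0.mono fun x (hx : 0 ≤ η x) => by
    simp only [Set.indicator_apply]; split_ifs <;> positivity)) hI.le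
  have hmean : 0 ≤ (∫ x, u x * η x ∂μ) / I :=
    div_nonneg (integral_nonneg_of_ae (hη0.mono fun x hx => mul_nonneg (hu0 x) hx)) hI.le
  have hdev : |(∫ x, u x * η x ∂μ) / I - a| ≤ 2 ^ (1 - m) / m * a ^ (1 - m) * A + κ * B :=
    calc |(∫ x, u x * η x ∂μ) / I - a| ≤ (∫ x, |u x - a| * η x ∂μ) / I :=
          abs_integral_mul_div_integral_sub_le hη huη hη0 hI
      _ ≤ (2 ^ (1 - m) / m * a ^ (1 - m) * (A * I) + κ * (B * I)) / I := by
          gcongr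
          simpa only [A, B, div_mul_cancel₀ _ hI.ne'] using
            integral_abs_sub_mul_le hm0 hm1 ha hu0 hη0
            (integrable_indicator_le_two_mul hm0.le ha.le hu hu0 hη)
            (integrable_indicator_two_mul_lt hm0 ha.le hu hu0 hη huη)
      _ = _ := by field_simp
  have haa : a ^ (m - 1) * a ^ (1 - m) = 1 := by rw [← rpow_add ha]; simp
  have hκ : κ ^ m = (1 - 2 ^ (-m))⁻¹ := by
    rw [← rpow_mul (inv_nonneg.2 hd.le), one_div_mul_cancel hm0.ne', rpow_one]
  calc |a ^ m - ((∫ x, u x * η x ∂μ) / I) ^ m|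
      ≤ a ^ (m - 1) * (2 ^ (1 - m) / m * a ^ (1 - m) * A) + 2 * (κ * B) ^ m :=
        abs_rpow_sub_rpow_le_of_abs_sub_le_add hm0.le hm1 ha hmean (by positivity)
          (by positivity) hdev
    _ = 2 ^ (1 - m) / m * A + 2 * (1 - 2 ^ (-m))⁻¹ * B ^ m := by
        rw [mul_rpow (by positivity) hB, hκ]
        linear_combination 2 ^ (1 - m) / m * A * haa
    _ ≤ _ := by
        have : 0 ≤ B ^ m := rpow_nonneg hB m
        gcongr <;> linarith [inv_pos.2 hd, div_pos (rpow_pos_of_pos two_pos (1 - m)) hm0]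

end WeightedMean

/-- For `m ∈ (0,1)` there is a constant `c > 0`, depending only on `m`, bounding
`|a^m - λ^m|` (with `λ` the `η`-weighted mean of `u`) by the weighted mean of
`|u^m - a^m|` on `{u ≤ 2a}` plus the `m`-th power of the weighted mean of
`|u^m - a^m|^{1/m}` on `{u > 2a}`. -/
theorem stmt_8 (m : ℝ) (hm0 : 0 < m) (hm1 : m < 1) :
    ∃ c : ℝ, 0 < c ∧
      ∀ (n : ℕ) (E : Set (Fin n → ℝ)), MeasurableSet E → volume E < ⊤ →
        ∀ η u : (Fin n → ℝ) → ℝ, Measurable η → (∀ x ∈ E, 0 ≤ η x) →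
          (∃ C : ℝ, ∀ x ∈ E, η x ≤ C) → 0 < ∫ x in E, η x →
          Measurable u → (∀ x, 0 ≤ u x) →
          IntegrableOn (fun x => u x * η x) E →
          ∀ a : ℝ, 0 < a →
            |a ^ m - ((∫ y in E, u y * η y) / (∫ y in E, η y)) ^ m| ≤
              c / (∫ y in E, η y) *
                  (∫ x in E,
                    {z | u z ≤ 2 * a}.indicator (fun z => |u z ^ m - a ^ m| * η z) x) +
                c * ((∫ x in E,
                    {z | 2 * a < u z}.indicator
                      (fun z => |u z ^ m - a ^ m| ^ (1 / m) * η z) x) /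
                  (∫ y in E, η y)) ^ m := by
  have hd := one_sub_two_rpow_neg_pos hm0
  refine ⟨2 ^ (1 - m) / m + 2 * (1 - 2 ^ (-m))⁻¹, by positivity, ?_⟩
  intro n E hE hEfin η u hηm hη0 ⟨C, hC⟩ hI hu hu0 huη a ha
  have hη : IntegrableOn η E :=
    Measure.integrableOn_of_bounded hEfin.ne hηm.aestronglyMeasurable
      (ae_restrict_of_forall_mem hE fun x hx => (abs_of_nonneg (hη0 x hx)).trans_le (hC x hx))
  rw [div_mul_eq_mul_div, mul_div_assoc]
  exact abs_rpow_sub_rpow_integral_mul_div_integral_le hm0 hm1.le ha hu hu0 hη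
    (ae_restrict_of_forall_mem hE hη0) hI huη
end

section
/- Persistence of intrinsicality under enlargement: let $n \ge 2$, $p \in \big(\tfrac{2n}{n+2}, 2\big)$, $\hat a > 0$, $c > 1$, $K \ge 1$, $(t_0,x_0) \in \mathbb{R}\times\mathbb{R}^n$, $S > 0$, and let $r : (0,S] \to (0,\infty)$ be nondecreasing and satisfy $r(s) \le c\,\gamma^{-\hat a}\, r(\gamma s)$ for all $s \in (0,S]$ and $\gamma \in (0,1]$. Write $\lambda_s^{2-p} := s/r(s)^2$ and $Q_s := (t_0-s,t_0+s)\times B_{r(s)}(x_0)$, and let $f \in L^1(Q_S)$ be such that $\fint_{Q_s}|f|\,dz \le \lambda_s^p$ for every $s \in (0,S]$ (all cylinders are sub-intrinsic). Then there is a constant $K' \ge 1$ depending only on $K$, $c$, $\hat a$, $n$, and $p$ such that: if $\lambda_s^p \le K \fint_{Q_s} |f|\,dz$ for some $s \in (0,S]$ (i.e. $Q_s$ is $K$-intrinsic), then for every $a \in (1,2]$ with $as \le S$ one has $\lambda_{as}^p \le K' \fint_{Q_{as}} |f|\,dz$ (i.e. $Q_{as}$ is $K'$-intrinsic). -/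
open MeasureTheory

/-- The space-time cylinder `(t₀-τ, t₀+τ) × B_ρ(x₀) ⊆ ℝ × ℝⁿ`. -/
def cyl (n : ℕ) (t₀ : ℝ) (x₀ : EuclideanSpace ℝ (Fin n)) (τ ρ : ℝ) :
    Set (ℝ × EuclideanSpace ℝ (Fin n)) :=
  Set.Ioo (t₀ - τ) (t₀ + τ) ×ˢ Metric.ball x₀ ρ

lemma vol_cyl (n : ℕ) (hn : 0 < n) (t₀ : ℝ) (x₀ : EuclideanSpace ℝ (Fin n)) (τ ρ : ℝ)
    (hτ : 0 ≤ τ) (hρ : 0 ≤ ρ) :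
    (volume (cyl n t₀ x₀ τ ρ)).toReal =
      (2*τ) * (ρ^n * (volume (Metric.ball (0 : EuclideanSpace ℝ (Fin n)) 1)).toReal) := by
  haveI : Nontrivial (EuclideanSpace ℝ (Fin n)) :=
    Module.nontrivial_of_finrank_pos (R := ℝ) (by simpa [finrank_euclideanSpace_fin] using hn)
  rw [cyl, Measure.volume_eq_prod, Measure.prod_prod, Real.volume_Ioo,
      Measure.addHaar_ball _ _ hρ, finrank_euclideanSpace_fin]
  rw [ENNReal.toReal_mul, ENNReal.toReal_mul, ENNReal.toReal_ofReal (by linarith),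
      ENNReal.toReal_ofReal (by positivity)]
  ring

lemma cyl_subset (n : ℕ) (t₀ : ℝ) (x₀ : EuclideanSpace ℝ (Fin n)) {τ₁ τ₂ ρ₁ ρ₂ : ℝ}
    (hτ : τ₁ ≤ τ₂) (hρ : ρ₁ ≤ ρ₂) : cyl n t₀ x₀ τ₁ ρ₁ ⊆ cyl n t₀ x₀ τ₂ ρ₂ :=
  Set.prod_mono (Set.Ioo_subset_Ioo (by linarith) (by linarith)) (Metric.ball_subset_ball hρ)

/-- Persistence of intrinsicality under enlargement: in a nondecreasing family of
sub-intrinsic cylinders with controlled radius growth, if `Q_s` is `K`-intrinsic then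
`Q_{as}` is `K'`-intrinsic for every `a ∈ (1,2]` with `as ≤ S`, where `K'` depends only
on `K`, `c`, `ahat`, `n`, `p`.  Here `λ_s^p = (s / r(s)²)^{p/(2-p)}`. -/
theorem stmt_13 (n : ℕ) (hn : 2 ≤ n) (p : ℝ)
    (hp1 : (2 * n : ℝ) / (n + 2) < p) (hp2 : p < 2)
    (ahat c K : ℝ) (hahat : 0 < ahat) (hc : 1 < c) (hK : 1 ≤ K)
    (t₀ : ℝ) (x₀ : EuclideanSpace ℝ (Fin n)) (S : ℝ) (hS : 0 < S)
    (r : ℝ → ℝ) (hrpos : ∀ s ∈ Set.Ioc (0 : ℝ) S, 0 < r s)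
    (hrmono : MonotoneOn r (Set.Ioc 0 S))
    (hrgrowth : ∀ s ∈ Set.Ioc (0 : ℝ) S, ∀ γ ∈ Set.Ioc (0 : ℝ) 1,
      r s ≤ c * γ ^ (-ahat) * r (γ * s))
    (f : ℝ × EuclideanSpace ℝ (Fin n) → ℝ)
    (hf : IntegrableOn f (cyl n t₀ x₀ S (r S)))
    (hsub : ∀ s ∈ Set.Ioc (0 : ℝ) S,
      (⨍ z in cyl n t₀ x₀ s (r s), |f z|) ≤ (s / (r s) ^ 2) ^ (p / (2 - p))) :
    ∃ K' : ℝ, 1 ≤ K' ∧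
      ∀ s ∈ Set.Ioc (0 : ℝ) S,
        (s / (r s) ^ 2) ^ (p / (2 - p)) ≤ K * ⨍ z in cyl n t₀ x₀ s (r s), |f z| →
        ∀ a : ℝ, 1 < a → a ≤ 2 → a * s ≤ S →
          (a * s / (r (a * s)) ^ 2) ^ (p / (2 - p)) ≤
            K' * ⨍ z in cyl n t₀ x₀ (a * s) (r (a * s)), |f z| := by
  have hn0 : 0 < n := by omega
  have hp0 : 0 < p := by
    have h1 : (0:ℝ) < (2 * n : ℝ) / (n + 2) := by positivity
    linarith
  have h2p : (0:ℝ) < 2 - p := by linarith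
  set e : ℝ := p / (2 - p) with he
  have he0 : 0 < e := by positivity
  have h2ahat : (1:ℝ) ≤ (2:ℝ) ^ ahat := Real.one_le_rpow one_le_two hahat.le
  set M : ℝ := 2 * (c * (2:ℝ) ^ ahat) ^ n with hM
  have hM1 : 1 ≤ M := by
    have : (1:ℝ) ≤ (c * (2:ℝ) ^ ahat) ^ n := one_le_pow₀ (by nlinarith)
    nlinarith
  set κ : ℝ := (volume (Metric.ball (0 : EuclideanSpace ℝ (Fin n)) 1)).toReal with hκ
  have hκ0 : 0 < κ := by
    rw [hκ]
    exact ENNReal.toReal_pos (Metric.measure_ball_pos volume _ one_pos).ne'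
      (measure_ball_lt_top).ne
  refine ⟨(2:ℝ) ^ e * (K * M), ?_, ?_⟩
  · have h2e : (1:ℝ) ≤ (2:ℝ) ^ e := Real.one_le_rpow one_le_two he0.le
    have h1 : (1:ℝ) * 1 ≤ (2:ℝ) ^ e * K := mul_le_mul h2e hK zero_le_one (by positivity)
    nlinarith
  intro s hs hintr a ha1 ha2 haS
  have hs0 : 0 < s := hs.1
  have has0 : 0 < a * s := by positivity
  have hasS : a * s ∈ Set.Ioc (0:ℝ) S := ⟨has0, haS⟩
  have hsS : s ≤ S := hs.2
  have hrs : 0 < r s := hrpos s hs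
  have hras : 0 < r (a * s) := hrpos _ hasS
  have hrS : 0 < r S := hrpos S ⟨hS, le_refl S⟩
  have hrs_le : r s ≤ r (a * s) := hrmono hs hasS (by nlinarith)
  -- growth bound : r (a*s) ≤ c * 2^ahat * r s
  have hgrow : r (a * s) ≤ c * (2:ℝ) ^ ahat * r s := by
    have ha0 : (0:ℝ) < a := by linarith
    have hγ : a⁻¹ ∈ Set.Ioc (0:ℝ) 1 := ⟨by positivity, by
      rw [inv_le_one_iff₀]; right; linarith⟩
    have := hrgrowth (a * s) hasS a⁻¹ hγ
    have hEq : a⁻¹ * (a * s) = s := by field_simp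
    rw [hEq] at this
    have hinv : (a⁻¹ : ℝ) ^ (-ahat) = a ^ ahat := by
      rw [Real.rpow_neg (by positivity), Real.inv_rpow ha0.le, inv_inv]
    rw [hinv] at this
    have haa : a ^ ahat ≤ (2:ℝ) ^ ahat := Real.rpow_le_rpow ha0.le ha2 hahat.le
    calc r (a * s) ≤ c * a ^ ahat * r s := this
      _ ≤ c * (2:ℝ) ^ ahat * r s :=
        mul_le_mul_of_nonneg_right (mul_le_mul_of_nonneg_left haa (by linarith)) hrs.le
  -- volumes
  have hVs := vol_cyl n hn0 t₀ x₀ s (r s) hs0.le hrs.le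
  have hVas := vol_cyl n hn0 t₀ x₀ (a * s) (r (a * s)) has0.le hras.le
  rw [← hκ] at hVs hVas
  -- subsets
  have hsubset1 : cyl n t₀ x₀ s (r s) ⊆ cyl n t₀ x₀ (a * s) (r (a * s)) :=
    cyl_subset _ _ _ (by nlinarith) hrs_le
  have hsubset2 : cyl n t₀ x₀ (a * s) (r (a * s)) ⊆ cyl n t₀ x₀ S (r S) :=
    cyl_subset _ _ _ haS (hrmono hasS ⟨hS, le_refl S⟩ haS)
  have hfint : IntegrableOn (fun z => |f z|) (cyl n t₀ x₀ (a * s) (r (a * s))) :=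
    (hf.mono_set hsubset2).abs
  rw [setAverage_eq, smul_eq_mul] at hintr
  rw [setAverage_eq, smul_eq_mul]
  set Vs : ℝ := (volume (cyl n t₀ x₀ s (r s))).toReal with hVsdef
  set Vas : ℝ := (volume (cyl n t₀ x₀ (a * s) (r (a * s)))).toReal with hVasdef
  set Is : ℝ := ∫ z in cyl n t₀ x₀ s (r s), |f z| with hIsdef
  set Ias : ℝ := ∫ z in cyl n t₀ x₀ (a * s) (r (a * s)), |f z| with hIasdef
  have hVs0 : 0 < Vs := by rw [hVs]; positivity
  have hVas0 : 0 < Vas := by rw [hVas]; positivity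
  have hII : Is ≤ Ias :=
    setIntegral_mono_set hfint (Filter.Eventually.of_forall fun z => abs_nonneg _)
      (HasSubset.Subset.eventuallyLE hsubset1)
  have hIas0 : (0:ℝ) ≤ Ias := integral_nonneg fun z => abs_nonneg _
  have hratio : Vas ≤ M * Vs := by
    rw [hVs, hVas, hM]
    have h1 : (r (a * s)) ^ n ≤ (c * (2:ℝ) ^ ahat) ^ n * (r s) ^ n := by
      rw [← mul_pow]; exact pow_le_pow_left₀ hras.le hgrow n
    calc 2 * (a * s) * ((r (a * s)) ^ n * κ)
        ≤ 2 * (2 * s) * (((c * (2:ℝ) ^ ahat) ^ n * (r s) ^ n) * κ) :=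
          mul_le_mul
            (by have := mul_le_mul_of_nonneg_right ha2 hs0.le; linarith)
            (mul_le_mul_of_nonneg_right h1 hκ0.le)
            (mul_nonneg (by positivity) hκ0.le) (by linarith)
      _ = 2 * (c * (2:ℝ) ^ ahat) ^ n * (2 * s * ((r s) ^ n * κ)) := by ring
  have hVinv : Vs⁻¹ ≤ M * Vas⁻¹ := by
    have h : (1:ℝ) / Vs ≤ M / Vas := (div_le_div_iff₀ hVs0 hVas0).mpr (by linarith)
    simpa [one_div, div_eq_mul_inv] using h
  -- rpow step
  have hbase : a * s / (r (a * s)) ^ 2 ≤ 2 * (s / (r s) ^ 2) := by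
    have h : a * s / (r (a * s)) ^ 2 ≤ (2 * s) / (r s) ^ 2 :=
      div_le_div₀ (by positivity)
        (by have := mul_le_mul_of_nonneg_right ha2 hs0.le; linarith) (by positivity)
        (pow_le_pow_left₀ hrs.le hrs_le 2)
    linarith [h, (by ring : (2:ℝ) * s / (r s) ^ 2 = 2 * (s / (r s) ^ 2))]
  have hlam : (a * s / (r (a * s)) ^ 2) ^ e ≤ (2:ℝ) ^ e * (s / (r s) ^ 2) ^ e := by
    calc (a * s / (r (a * s)) ^ 2) ^ e ≤ (2 * (s / (r s) ^ 2)) ^ e :=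
          Real.rpow_le_rpow (by positivity) hbase he0.le
      _ = (2:ℝ) ^ e * (s / (r s) ^ 2) ^ e :=
          Real.mul_rpow (by norm_num) (by positivity)
  have h3 : Vs⁻¹ * Is ≤ Vs⁻¹ * Ias :=
    mul_le_mul_of_nonneg_left hII (inv_nonneg.mpr hVs0.le)
  have h4 : Vs⁻¹ * Ias ≤ M * Vas⁻¹ * Ias := mul_le_mul_of_nonneg_right hVinv hIas0
  calc (a * s / (r (a * s)) ^ 2) ^ e
      ≤ (2:ℝ) ^ e * (s / (r s) ^ 2) ^ e := hlam
    _ ≤ (2:ℝ) ^ e * (K * (Vs⁻¹ * Is)) := mul_le_mul_of_nonneg_left hintr (by positivity)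
    _ ≤ (2:ℝ) ^ e * (K * (Vs⁻¹ * Ias)) :=
        mul_le_mul_of_nonneg_left (mul_le_mul_of_nonneg_left h3 (by linarith)) (by positivity)
    _ ≤ (2:ℝ) ^ e * (K * (M * Vas⁻¹ * Ias)) :=
        mul_le_mul_of_nonneg_left (mul_le_mul_of_nonneg_left h4 (by linarith)) (by positivity)
    _ = (2:ℝ) ^ e * (K * M) * (Vas⁻¹ * Ias) := by ring
end

section
/- Well-definedness, positivity and continuity of the intrinsic radius function: let $n \ge 2$, $p \in \big(\tfrac{2n}{n+2}, 2\big)$, $(t_0,x_0) \in \mathbb{R}\times\mathbb{R}^n$, $S,R > 0$, and let $f \in L^1\big((t_0-S,t_0+S)\times B_R(x_0)\big)$ be nonzero on every cylinder $(t_0-s,t_0+s)\times B_\rho(x_0)$ with $s\in(0,S]$, $\rho\in(0,R)$ (i.e. $\int_{t_0-s/2}^{t_0+s/2}\int_{B_\rho(x_0)} |f|\,dx\,dt > 0$). For $s \in (0,S]$ define $\tilde r(s) := \sup\Big\{\rho < R \;:\; \Big(\int_{t_0-s/2}^{t_0+s/2}\int_{B_\rho(x_0)} |f|\,dx\,dt\Big)^{2-p}\,\rho^{2p}\,|B_\rho|^{p-2}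 \le s^2\Big\}$. Then $\tilde r(s)$ is well defined and strictly positive for every $s \in (0,S]$, and the function $s \mapsto \tilde r(s)$ is continuous on $(0,S]$. -/
open MeasureTheory Set Metric Filter Topology

/-- Well-definedness, positivity and continuity of the intrinsic radius function
`s ↦ r̃(s) = sup {ρ ∈ (0,R) : (∫∫_{(t₀-s/2,t₀+s/2) × B_ρ} |f|)^{2-p} ρ^{2p} |B_ρ|^{p-2} ≤ s²}`,
for `p ∈ (2n/(n+2), 2)` and `f ∈ L¹` not vanishing on any sub-cylinder. -/
theorem stmt_14 (n : ℕ) (hn : 2 ≤ n) (p : ℝ)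
    (hp1 : (2 * n : ℝ) / (n + 2) < p) (hp2 : p < 2)
    (t₀ : ℝ) (x₀ : EuclideanSpace ℝ (Fin n)) (S R : ℝ) (hS : 0 < S) (hR : 0 < R)
    (f : ℝ × EuclideanSpace ℝ (Fin n) → ℝ)
    (hf : IntegrableOn f (Set.Ioo (t₀ - S) (t₀ + S) ×ˢ Metric.ball x₀ R))
    (hfnz : ∀ s ∈ Set.Ioc (0 : ℝ) S, ∀ ρ ∈ Set.Ioo (0 : ℝ) R,
      0 < ∫ z in Set.Ioo (t₀ - s / 2) (t₀ + s / 2) ×ˢ Metric.ball x₀ ρ, |f z|)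
    (tr : ℝ → ℝ)
    (htr : ∀ s : ℝ, tr s =
      sSup {ρ : ℝ | 0 < ρ ∧ ρ < R ∧
        (∫ z in Set.Ioo (t₀ - s / 2) (t₀ + s / 2) ×ˢ Metric.ball x₀ ρ, |f z|) ^ (2 - p) *
            ρ ^ (2 * p) * (volume (Metric.ball x₀ ρ)).toReal ^ (p - 2) ≤ s ^ 2}) :
    (∀ s ∈ Set.Ioc (0 : ℝ) S, 0 < tr s) ∧ ContinuousOn tr (Set.Ioc 0 S) := by
  classical
  haveI : NeZero n := ⟨by omega⟩
  -- basic numerology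
  have hnR : (0:ℝ) < (n:ℝ) + 2 := by positivity
  set e : ℝ := 2 * p + n * (p - 2) with he_def
  have he : 0 < e := by
    rw [div_lt_iff₀ hnR] at hp1
    simp only [he_def]; nlinarith
  have h2p : 0 < 2 - p := by linarith
  -- the big cylinder and the globalized integrand
  set bigQ : Set (ℝ × EuclideanSpace ℝ (Fin n)) :=
    Set.Ioo (t₀ - S) (t₀ + S) ×ˢ Metric.ball x₀ R with hbigQ_def
  have hbigQm : MeasurableSet bigQ := measurableSet_Ioo.prod measurableSet_ball
  set g : ℝ × EuclideanSpace ℝ (Fin n) → ℝ := bigQ.indicator (fun z => |f z|) with hg_def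
  have hgint : Integrable g := by
    rw [hg_def, integrable_indicator_iff hbigQm]; exact hf.abs
  have hg0 : ∀ z, 0 ≤ g z := fun z => Set.indicator_nonneg (fun _ _ => abs_nonneg _) z
  set Q : ℝ → ℝ → Set (ℝ × EuclideanSpace ℝ (Fin n)) :=
    fun s ρ => Set.Ioo (t₀ - s/2) (t₀ + s/2) ×ˢ Metric.ball x₀ ρ with hQ_def
  have hQm : ∀ s ρ, MeasurableSet (Q s ρ) := fun s ρ => measurableSet_Ioo.prod measurableSet_ball
  have hQsub : ∀ s ρ, s ≤ S → ρ ≤ R → Q s ρ ⊆ bigQ := by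
    intro s ρ hs hρ
    exact Set.prod_mono (Set.Ioo_subset_Ioo (by linarith) (by linarith))
      (Metric.ball_subset_ball hρ)
  set J : ℝ → ℝ → ℝ := fun s ρ => ∫ z in Q s ρ, g z with hJ_def
  have hJI : ∀ s ρ, s ≤ S → ρ ≤ R →
      J s ρ = ∫ z in Set.Ioo (t₀ - s / 2) (t₀ + s / 2) ×ˢ Metric.ball x₀ ρ, |f z| := by
    intro s ρ hs hρ
    exact setIntegral_congr_fun (hQm s ρ)
      (fun z hz => Set.indicator_of_mem (hQsub s ρ hs hρ hz) _)
  have hJmono : ∀ s₁ s₂ ρ₁ ρ₂, s₁ ≤ s₂ → ρ₁ ≤ ρ₂ → J s₁ ρ₁ ≤ J s₂ ρ₂ := by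
    intro s₁ s₂ ρ₁ ρ₂ hs hρ
    refine setIntegral_mono_set hgint.integrableOn
      (ae_of_all _ fun z => hg0 z) (ae_of_all _ fun z hz => ?_)
    exact Set.prod_mono (Set.Ioo_subset_Ioo (by linarith) (by linarith))
      (Metric.ball_subset_ball hρ) hz
  have hJnonneg : ∀ s ρ, 0 ≤ J s ρ := fun s ρ =>
    setIntegral_nonneg (hQm s ρ) (fun z _ => hg0 z)
  have hJpos : ∀ s ∈ Set.Ioc (0:ℝ) S, ∀ ρ ∈ Set.Ioo (0:ℝ) R, 0 < J s ρ := by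
    intro s hs ρ hρ
    rw [hJI s ρ hs.2 hρ.2.le]
    exact hfnz s hs ρ hρ
  -- joint continuity of J
  have hJcont : ∀ s ρ : ℝ, 0 < ρ → ContinuousAt (fun q : ℝ × ℝ => J q.1 q.2) (s, ρ) := by
    intro s ρ hρ
    rw [ContinuousAt, Filter.tendsto_iff_seq_tendsto]
    intro u hu
    have hu1 : Tendsto (fun k => (u k).1) atTop (nhds s) := (continuous_fst.tendsto _).comp hu
    have hu2 : Tendsto (fun k => (u k).2) atTop (nhds ρ) := (continuous_snd.tendsto _).comp hu
    have key : ∀ s' ρ' : ℝ, J s' ρ' = ∫ z, (Q s' ρ').indicator g z := fun s' ρ' =>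
      (integral_indicator (hQm s' ρ')).symm
    simp only [Function.comp_def, key]
    refine tendsto_integral_of_dominated_convergence g
      (fun k => hgint.aestronglyMeasurable.indicator (hQm _ _)) hgint
      (fun k => ae_of_all _ fun z => ?_) ?_
    · rw [Real.norm_eq_abs, abs_of_nonneg (Set.indicator_nonneg (fun w _ => hg0 w) z)]
      exact Set.indicator_le_self' (fun w _ => hg0 w) z
    · have hNm : volume ((({t₀ - s/2} : Set ℝ) ×ˢ (Set.univ : Set (EuclideanSpace ℝ (Fin n)))) ∪
          (({t₀ + s/2} : Set ℝ) ×ˢ Set.univ) ∪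
          ((Set.univ : Set ℝ) ×ˢ Metric.sphere x₀ ρ)) = 0 := by
        refine measure_union_null (measure_union_null ?_ ?_) ?_
        · rw [Measure.volume_eq_prod, Measure.prod_prod, Real.volume_singleton, zero_mul]
        · rw [Measure.volume_eq_prod, Measure.prod_prod, Real.volume_singleton, zero_mul]
        · rw [Measure.volume_eq_prod, Measure.prod_prod, Measure.addHaar_sphere, mul_zero]
      filter_upwards [measure_eq_zero_iff_ae_notMem.mp hNm] with z hz
      simp only [Set.mem_union, not_or, Set.mem_prod, Set.mem_singleton_iff, Set.mem_univ,
        and_true, true_and, Metric.mem_sphere] at hz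
      obtain ⟨⟨hz1, hz2⟩, hz3⟩ := hz
      have hten1 : Tendsto (fun k => t₀ - (u k).1/2) atTop (nhds (t₀ - s/2)) :=
        tendsto_const_nhds.sub (hu1.div_const 2)
      have hten2 : Tendsto (fun k => t₀ + (u k).1/2) atTop (nhds (t₀ + s/2)) :=
        tendsto_const_nhds.add (hu1.div_const 2)
      by_cases hzQ : z ∈ Q s ρ
      · rw [Set.indicator_of_mem hzQ]
        obtain ⟨⟨hl, hr⟩, hb⟩ := hzQ
        have e1 : ∀ᶠ k in atTop, t₀ - (u k).1/2 < z.1 := hten1.eventually_lt_const hl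
        have e2 : ∀ᶠ k in atTop, z.1 < t₀ + (u k).1/2 := hten2.eventually_const_lt hr
        have e3 : ∀ᶠ k in atTop, dist z.2 x₀ < (u k).2 :=
          hu2.eventually_const_lt (Metric.mem_ball.mp hb)
        refine Filter.Tendsto.congr' ?_ tendsto_const_nhds
        filter_upwards [e1, e2, e3] with k h1 h2 h3
        refine (Set.indicator_of_mem ?_ g).symm
        exact Set.mem_prod.mpr ⟨Set.mem_Ioo.mpr ⟨h1, h2⟩, Metric.mem_ball.mpr h3⟩
      · rw [Set.indicator_of_notMem hzQ]
        refine Filter.Tendsto.congr' ?_ tendsto_const_nhds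
        rcases not_and_or.mp (fun h => hzQ (Set.mem_prod.mpr h)) with hnt | hnb
        · rcases not_and_or.mp (fun h => hnt (Set.mem_Ioo.mpr h)) with h | h
          · have hlt : z.1 < t₀ - s/2 := lt_of_le_of_ne (not_lt.mp h) hz1
            filter_upwards [hten1.eventually_const_lt hlt] with k hk
            exact (Set.indicator_of_notMem (fun hmem => absurd hmem.1.1 (not_lt.mpr hk.le)) g).symm
          · have hlt : t₀ + s/2 < z.1 := lt_of_le_of_ne (not_lt.mp h) (Ne.symm hz2)
            filter_upwards [hten2.eventually_lt_const hlt] with k hk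
            exact (Set.indicator_of_notMem (fun hmem => absurd hmem.1.2 (not_lt.mpr hk.le)) g).symm
        · have hlt : ρ < dist z.2 x₀ :=
            lt_of_le_of_ne (not_lt.mp fun h => hnb (Metric.mem_ball.mpr h)) (Ne.symm hz3)
          filter_upwards [hu2.eventually_lt_const hlt] with k hk
          exact (Set.indicator_of_notMem
            (fun hmem => absurd (Metric.mem_ball.mp hmem.2) (not_lt.mpr hk.le)) g).symm
  -- volume of balls
  obtain ⟨c, hc, hV⟩ : ∃ c : ℝ, 0 < c ∧ ∀ ρ : ℝ, 0 ≤ ρ →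
      (volume (Metric.ball x₀ ρ)).toReal = ρ ^ (n:ℕ) * c := by
    refine ⟨(volume (Metric.ball (0 : EuclideanSpace ℝ (Fin n)) 1)).toReal, ?_, ?_⟩
    · exact ENNReal.toReal_pos (ne_of_gt (measure_ball_pos _ _ one_pos))
        (measure_ball_lt_top).ne
    · intro ρ hρ
      rw [Measure.addHaar_ball volume x₀ hρ, ENNReal.toReal_mul,
        ENNReal.toReal_ofReal (by positivity), finrank_euclideanSpace_fin]
  -- the normalized gauge function
  set G : ℝ → ℝ → ℝ := fun s ρ => (J s ρ) ^ (2 - p) * (c ^ (p - 2) * ρ ^ e) with hG_def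
  have hGeq : ∀ s ρ, s ≤ S → 0 < ρ → ρ < R →
      (∫ z in Set.Ioo (t₀ - s / 2) (t₀ + s / 2) ×ˢ Metric.ball x₀ ρ, |f z|) ^ (2 - p) *
        ρ ^ (2 * p) * (volume (Metric.ball x₀ ρ)).toReal ^ (p - 2) = G s ρ := by
    intro s ρ hs hρ0 hρR
    have h1 : ((ρ:ℝ)^(n:ℕ)) ^ (p-2) = ρ ^ ((n:ℝ)*(p-2)) := by
      rw [← Real.rpow_natCast ρ n, ← Real.rpow_mul hρ0.le]
    rw [← hJI s ρ hs hρR.le, hV ρ hρ0.le]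
    simp only [hG_def]
    rw [Real.mul_rpow (by positivity) hc.le, h1, he_def, Real.rpow_add hρ0]
    ring
  -- the admissible sets
  set A : ℝ → Set ℝ := fun s => {ρ : ℝ | 0 < ρ ∧ ρ < R ∧ G s ρ ≤ s ^ 2} with hA_def
  have htr' : ∀ s ∈ Set.Ioc (0:ℝ) S, tr s = sSup (A s) := by
    intro s hs
    rw [htr s]
    congr 1
    ext ρ
    simp only [hA_def, Set.mem_setOf_eq]
    constructor
    · rintro ⟨h1, h2, h3⟩
      exact ⟨h1, h2, by rwa [← hGeq s ρ hs.2 h1 h2]⟩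
    · rintro ⟨h1, h2, h3⟩
      exact ⟨h1, h2, by rwa [hGeq s ρ hs.2 h1 h2]⟩
  have hAbdd : ∀ s, BddAbove (A s) := fun s => ⟨R, fun ρ hρ => hρ.2.1.le⟩
  -- strict monotonicity of G in ρ
  have hGlt : ∀ s ∈ Set.Ioc (0:ℝ) S, ∀ ρ₁ ρ₂ : ℝ, 0 < ρ₁ → ρ₁ < ρ₂ → ρ₂ < R →
      G s ρ₁ < G s ρ₂ := by
    intro s hs ρ₁ ρ₂ h1 h12 h2R
    have hJ2 : 0 < J s ρ₂ := hJpos s hs ρ₂ ⟨lt_trans h1 h12, h2R⟩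
    have ha : (J s ρ₁) ^ (2-p) ≤ (J s ρ₂) ^ (2-p) :=
      Real.rpow_le_rpow (hJnonneg s ρ₁) (hJmono s s ρ₁ ρ₂ le_rfl h12.le) h2p.le
    have ha2 : 0 < (J s ρ₂) ^ (2-p) := Real.rpow_pos_of_pos hJ2 _
    have ha1 : 0 ≤ (J s ρ₁) ^ (2-p) := Real.rpow_nonneg (hJnonneg s ρ₁) _
    have hb : (0:ℝ) < c ^ (p-2) := Real.rpow_pos_of_pos hc _
    have hr : ρ₁ ^ e < ρ₂ ^ e := Real.rpow_lt_rpow h1.le h12 he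
    simp only [hG_def]
    calc (J s ρ₁) ^ (2-p) * (c ^ (p-2) * ρ₁ ^ e)
        ≤ (J s ρ₂) ^ (2-p) * (c ^ (p-2) * ρ₁ ^ e) := by
          apply mul_le_mul_of_nonneg_right ha
          positivity
      _ < (J s ρ₂) ^ (2-p) * (c ^ (p-2) * ρ₂ ^ e) :=
          mul_lt_mul_of_pos_left (mul_lt_mul_of_pos_left hr hb) ha2
  -- positivity: small radii are admissible
  have hAmem : ∀ s ∈ Set.Ioc (0:ℝ) S, ∃ ρ₀, 0 < ρ₀ ∧ ρ₀ ∈ A s := by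
    intro s hs
    set C : ℝ := (J S R) ^ (2-p) * c ^ (p-2) with hC_def
    have hGle : ∀ ρ : ℝ, 0 < ρ → ρ ≤ R → G s ρ ≤ C * ρ ^ e := by
      intro ρ hρ0 hρR
      have ha : (J s ρ) ^ (2-p) ≤ (J S R) ^ (2-p) :=
        Real.rpow_le_rpow (hJnonneg s ρ) (hJmono s S ρ R hs.2 hρR) h2p.le
      have hb : (0:ℝ) < c ^ (p-2) := Real.rpow_pos_of_pos hc _
      simp only [hG_def, hC_def]
      calc (J s ρ) ^ (2-p) * (c ^ (p-2) * ρ ^ e)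
          ≤ (J S R) ^ (2-p) * (c ^ (p-2) * ρ ^ e) := by
            apply mul_le_mul_of_nonneg_right ha
            positivity
        _ = (J S R) ^ (2-p) * c ^ (p-2) * ρ ^ e := by ring
    have hs2 : 0 < s ^ 2 := pow_pos hs.1 2
    have htend : Tendsto (fun ρ : ℝ => C * ρ ^ e) (nhdsWithin 0 (Set.Ioi 0)) (nhds 0) := by
      have : ContinuousAt (fun ρ : ℝ => ρ ^ e) 0 :=
        Real.continuousAt_rpow_const 0 e (Or.inr he.le)
      have h0 : (fun ρ : ℝ => C * ρ ^ e) 0 = 0 := by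
        simp [Real.zero_rpow he.ne']
      have : ContinuousAt (fun ρ : ℝ => C * ρ ^ e) 0 := continuousAt_const.mul this
      simpa [h0] using (this.continuousWithinAt (s := Set.Ioi 0)).tendsto
    have h1 : ∀ᶠ ρ in nhdsWithin (0:ℝ) (Set.Ioi 0), C * ρ ^ e < s ^ 2 :=
      htend.eventually_lt_const hs2
    have h2 : ∀ᶠ ρ in nhdsWithin (0:ℝ) (Set.Ioi 0), ρ < R :=
      eventually_nhdsWithin_of_eventually_nhds (Filter.Tendsto.eventually_lt_const hR tendsto_id)
    have h3 : ∀ᶠ ρ in nhdsWithin (0:ℝ) (Set.Ioi 0), ρ ∈ Set.Ioi (0:ℝ) :=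
      eventually_mem_nhdsWithin
    obtain ⟨ρ₀, hρ₀1, hρ₀2, hρ₀3⟩ := (h1.and (h2.and h3)).exists
    exact ⟨ρ₀, hρ₀3, hρ₀3, hρ₀2, (hGle ρ₀ hρ₀3 hρ₀2.le).trans hρ₀1.le⟩
  have htrpos : ∀ s ∈ Set.Ioc (0:ℝ) S, 0 < tr s := by
    intro s hs
    obtain ⟨ρ₀, hρ₀, hmem⟩ := hAmem s hs
    rw [htr' s hs]
    exact lt_of_lt_of_le hρ₀ (le_csSup (hAbdd s) hmem)
  refine ⟨htrpos, ?_⟩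
  -- continuity
  intro s hs
  have hAne : ∀ s' ∈ Set.Ioc (0:ℝ) S, (A s').Nonempty := by
    intro s' hs'
    obtain ⟨ρ₀, _, hm⟩ := hAmem s' hs'
    exact ⟨ρ₀, hm⟩
  have htrR : tr s ≤ R := by
    rw [htr' s hs]
    exact csSup_le (hAne s hs) fun ρ h => h.2.1.le
  have htrp : 0 < tr s := htrpos s hs
  have hL : ∀ ρ : ℝ, 0 < ρ → ρ < tr s → G s ρ < s ^ 2 := by
    intro ρ h0 hlt
    rw [htr' s hs] at hlt
    obtain ⟨ρ', hρ'A, hltρ'⟩ := exists_lt_of_lt_csSup (hAne s hs) hlt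
    exact lt_of_lt_of_le (hGlt s hs ρ ρ' h0 hltρ' hρ'A.2.1) hρ'A.2.2
  have hU : ∀ ρ : ℝ, tr s < ρ → ρ < R → s ^ 2 < G s ρ := by
    intro ρ hlt hρR
    by_contra h
    push_neg at h
    have hmem : ρ ∈ A s := ⟨lt_trans htrp hlt, hρR, h⟩
    have := le_csSup (hAbdd s) hmem
    rw [← htr' s hs] at this
    linarith
  have hGcont : ∀ ρ' : ℝ, 0 < ρ' → ρ' < R → ContinuousAt (fun s' : ℝ => G s' ρ') s := by
    intro ρ' h0 hR'
    have hmap : ContinuousAt (fun s' : ℝ => (s', ρ')) s :=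
      (continuous_id.prodMk continuous_const).continuousAt
    have hJc : ContinuousAt (fun s' : ℝ => J s' ρ') s :=
      ContinuousAt.comp (f := fun s' : ℝ => (s', ρ')) (hJcont s ρ' h0) hmap
    have hpos : 0 < J s ρ' := hJpos s hs ρ' ⟨h0, hR'⟩
    have hr : ContinuousAt (fun x : ℝ => x ^ (2 - p)) (J s ρ') :=
      Real.continuousAt_rpow_const _ _ (Or.inl hpos.ne')
    simp only [hG_def]
    exact (ContinuousAt.comp (f := fun s' : ℝ => J s' ρ') hr hJc).mul continuousAt_const
  rw [ContinuousWithinAt, Metric.tendsto_nhds]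
  intro ε hε
  -- lower bound
  set δ : ℝ := min ε (tr s) / 2 with hδ_def
  have hδ0 : 0 < δ := by
    rw [hδ_def]
    have := lt_min hε htrp
    positivity
  have hδε : δ < ε := by
    rw [hδ_def]
    have : min ε (tr s) ≤ ε := min_le_left _ _
    linarith
  set ρ₁ : ℝ := tr s - δ with hρ₁_def
  have hρ₁0 : 0 < ρ₁ := by
    rw [hρ₁_def, hδ_def]
    have : min ε (tr s) ≤ tr s := min_le_right _ _
    linarith
  have hρ₁lt : ρ₁ < tr s := by rw [hρ₁_def]; linarith
  have hρ₁R : ρ₁ < R := lt_of_lt_of_le hρ₁lt htrR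
  have hev1 : ∀ᶠ s' in nhds s, G s' ρ₁ < s' ^ 2 := by
    have hc : Tendsto (fun s' : ℝ => G s' ρ₁ - s' ^ 2) (nhds s) (nhds (G s ρ₁ - s ^ 2)) :=
      (hGcont ρ₁ hρ₁0 hρ₁R).sub ((continuous_pow 2).continuousAt)
    have hneg : G s ρ₁ - s ^ 2 < 0 := by linarith [hL ρ₁ hρ₁0 hρ₁lt]
    filter_upwards [hc.eventually_lt_const hneg] with s' h
    linarith
  have hlower : ∀ᶠ s' in nhds s, s' ∈ Set.Ioc (0:ℝ) S → tr s - ε < tr s' := by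
    filter_upwards [hev1] with s' h hs'
    have hmem : ρ₁ ∈ A s' := ⟨hρ₁0, hρ₁R, h.le⟩
    have : ρ₁ ≤ tr s' := by
      rw [htr' s' hs']
      exact le_csSup (hAbdd s') hmem
    rw [hρ₁_def] at this
    linarith
  have hupper : ∀ᶠ s' in nhds s, s' ∈ Set.Ioc (0:ℝ) S → tr s' < tr s + ε := by
    rcases lt_or_ge (tr s) R with hcase | hcase
    · set ρ₂ : ℝ := min (tr s + ε/2) ((tr s + R)/2) with hρ₂_def
      have h₂gt : tr s < ρ₂ := lt_min (by linarith) (by linarith)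
      have h₂R : ρ₂ < R := lt_of_le_of_lt (min_le_right _ _) (by linarith)
      have h₂lt : ρ₂ < tr s + ε := lt_of_le_of_lt (min_le_left _ _) (by linarith)
      have h₂0 : 0 < ρ₂ := lt_trans htrp h₂gt
      have hev2 : ∀ᶠ s' in nhds s, s' ^ 2 < G s' ρ₂ := by
        have hc : Tendsto (fun s' : ℝ => G s' ρ₂ - s' ^ 2) (nhds s) (nhds (G s ρ₂ - s ^ 2)) :=
          (hGcont ρ₂ h₂0 h₂R).sub ((continuous_pow 2).continuousAt)
        have hpos' : 0 < G s ρ₂ - s ^ 2 := by linarith [hU ρ₂ h₂gt h₂R]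
        filter_upwards [hc.eventually_const_lt hpos'] with s' h
        linarith
      filter_upwards [hev2] with s' h hs'
      have htr'le : tr s' ≤ ρ₂ := by
        rw [htr' s' hs']
        refine csSup_le (hAne s' hs') fun ρ hρ => ?_
        by_contra hgt
        push_neg at hgt
        have := hGlt s' hs' ρ₂ ρ h₂0 hgt hρ.2.1
        exact absurd hρ.2.2 (not_le.mpr (lt_trans h this))
      linarith
    · filter_upwards with s' hs'
      have : tr s' ≤ R := by
        rw [htr' s' hs']
        exact csSup_le (hAne s' hs') fun ρ h => h.2.1.le
      linarith
  filter_upwards [eventually_nhdsWithin_of_eventually_nhds (hlower.and hupper),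
    eventually_mem_nhdsWithin] with s' hs'2 hs'mem
  rw [Real.dist_eq, abs_lt]
  exact ⟨by linarith [hs'2.1 hs'mem], by linarith [hs'2.2 hs'mem]⟩
end
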